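/- arXiv:0811.4601 — 5 statements merged into one kernel-verified Lean document; each statement's English description precedes it below -/
import Mathlib

section
/- Let 0 < a < b and let d : [a,b] → (0,∞) be a continuous function whose negative variation on [a,b] is finite. Then there exists a continuous function φ : [a,b] → (0,∞) such that both φ and the product function x ↦ φ(x)·d(x) are non-increasing on [a,b]. -/
open Set

/-- A function `f` has finite negative variation on a set `I ⊆ ℝ` if the supremum, over all
finite increasing sequences `t₀ < t₁ < … < t_k` of points of `I`, of
`∑_{i=0}^{k-1} max (f (t i) - f (t (i+1))) 0` is finite. -/
def HasFiniteNegVariationOn (f : ℝ → ℝ) (I : Set ℝ) : Prop :=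
  BddAbove {s : ℝ | ∃ (k : ℕ) (t : ℕ → ℝ), (∀ i, i < k → t i < t (i + 1)) ∧
    (∀ i, i ≤ k → t i ∈ I) ∧ s = ∑ i ∈ Finset.range k, max (f (t i) - f (t (i + 1))) 0}

/-! The finite negative variation of `d`, together with its boundedness on the compact interval,
makes `d` of bounded variation, so its variation function `V x` from `a` is continuous, increasing,
and satisfies `|d y - d x| ≤ V y - V x` for `x ≤ y`. With `m = min d > 0`, the function `d` can
then grow between `x` and `y` by at most `V y - V x ≤ d x * (V y - V x) / m`, i.e. by a factor at
most `exp ((V y - V x) / m)`, so `φ = exp (-V / m)` works. -/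

theorem BoundedVariationOn.continuousWithinAt_variationOnFromTo {α E : Type*} [LinearOrder α]
    [TopologicalSpace α] [OrderTopology α] [PseudoEMetricSpace E] {f : α → E} {s : Set α}
    (hf : BoundedVariationOn f s) {a x : α} (ha : a ∈ s) (hx : x ∈ s)
    (hfx : ContinuousWithinAt f s x) :
    ContinuousWithinAt (variationOnFromTo f s a) s x := by
  have hsplit : ∀ y ∈ s, variationOnFromTo f s a y = variationOnFromTo f s a x +
      ((eVariationOn f (s ∩ Icc x y)).toReal - (eVariationOn f (s ∩ Icc y x)).toReal) := by
    intro y hy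
    rw [← variationOnFromTo.add hf.locallyBoundedVariationOn ha hx hy]
    congr 1
    rcases le_total x y with hxy | hyx
    · rw [variationOnFromTo.eq_of_le f s hxy,
        eVariationOn.subsingleton f (s := s ∩ Icc y x) (by grind [Set.Subsingleton]),
        ENNReal.toReal_zero, sub_zero]
    · rw [variationOnFromTo.eq_of_ge f s hyx,
        eVariationOn.subsingleton f (s := s ∩ Icc x y) (by grind [Set.Subsingleton]),
        ENNReal.toReal_zero, zero_sub]
  have hright := (ENNReal.tendsto_toReal ENNReal.zero_ne_top).comp
    (hf.tendsto_eVariationOn_Icc_zero_right x (hfx.mono inter_subset_left))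
  have hleft := (ENNReal.tendsto_toReal ENNReal.zero_ne_top).comp
    (hf.tendsto_eVariationOn_Icc_zero_left (hfx.mono inter_subset_left))
  have := tendsto_const_nhds (x := variationOnFromTo f s a x) |>.add (hright.sub hleft)
  rw [ENNReal.toReal_zero, sub_zero, add_zero] at this
  exact this.congr' (eventually_nhdsWithin_of_forall fun y hy => (hsplit y hy).symm)

theorem BoundedVariationOn.continuousOn_variationOnFromTo {α E : Type*} [LinearOrder α]
    [TopologicalSpace α] [OrderTopology α] [PseudoEMetricSpace E] {f : α → E} {s : Set α}
    (hf : BoundedVariationOn f s) {a : α} (ha : a ∈ s) (hfc : ContinuousOn f s) :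
    ContinuousOn (variationOnFromTo f s a) s := fun x hx =>
  hf.continuousWithinAt_variationOnFromTo ha hx (hfc x hx)

theorem HasFiniteNegVariationOn.boundedVariationOn {f : ℝ → ℝ} {I : Set ℝ}
    (hf : HasFiniteNegVariationOn f I) (hfa : BddAbove (f '' I)) (hfb : BddBelow (f '' I)) :
    BoundedVariationOn f I := by
  obtain ⟨C, hC⟩ := hf
  obtain ⟨M, hM⟩ := hfa
  obtain ⟨m, hm⟩ := hfb
  refine ne_top_of_le_ne_top (ENNReal.ofReal_ne_top (r := M - m + 2 * C)) ?_
  rw [eVariationOn.eVariationOn_eq_strictMonoOn]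
  refine iSup_le fun ⟨n, u, hu, hmem⟩ => ?_
  have hnegC : ∑ i ∈ Finset.range n, max (f (u i) - f (u (i + 1))) 0 ≤ C :=
    hC ⟨n, u, fun i hi => hu (mem_Iic.2 hi.le) (mem_Iic.2 hi) (Nat.lt_succ_self i),
      fun i hi => hmem i (mem_Iic.2 hi), rfl⟩
  -- a monotone sum of `|Δf|` is the net change of `f` plus twice the sum of the negative parts
  have habs : ∀ x y : ℝ, |y - x| = (y - x) + 2 * max (x - y) 0 := by
    intro x y
    rcases le_total x y with h | h
    · rw [abs_of_nonneg (by linarith), max_eq_right (by linarith)]; ring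
    · rw [abs_of_nonpos (by linarith), max_eq_left (by linarith)]; ring
  calc ∑ i ∈ Finset.range n, edist (f (u (i + 1))) (f (u i))
      = ENNReal.ofReal (∑ i ∈ Finset.range n, |f (u (i + 1)) - f (u i)|) := by
        rw [ENNReal.ofReal_sum_of_nonneg fun i _ => abs_nonneg _]
        simp only [edist_dist, Real.dist_eq]
    _ ≤ ENNReal.ofReal (M - m + 2 * C) := by
        refine ENNReal.ofReal_le_ofReal ?_
        rw [Finset.sum_congr rfl fun i _ => habs _ _, Finset.sum_add_distrib,
          Finset.sum_range_sub (fun i => f (u i)), ← Finset.mul_sum]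
        have := hM (mem_image_of_mem f (hmem n (mem_Iic.2 le_rfl)))
        have := hm (mem_image_of_mem f (hmem 0 (mem_Iic.2 (Nat.zero_le n))))
        linarith

theorem antitoneOn_exp_neg_div_mul {α : Type*} [Preorder α] {s : Set α} {f W : α → ℝ} {m : ℝ}
    (hm : 0 < m) (hfm : ∀ x ∈ s, m ≤ f x)
    (hW : ∀ x ∈ s, ∀ y ∈ s, x ≤ y → |f y - f x| ≤ W y - W x) :
    AntitoneOn (fun x => Real.exp (-W x / m) * f x) s := by
  intro x hx y hy hxy
  have hΔ := hW x hx y hy hxy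
  have hfx := hfm x hx
  have hΔnonneg : 0 ≤ W y - W x := (abs_nonneg _).trans hΔ
  have hgrowth : f y ≤ f x * Real.exp ((W y - W x) / m) := calc
    f y ≤ f x + (W y - W x) := by linarith [le_abs_self (f y - f x)]
    _ ≤ f x * (1 + (W y - W x) / m) := by
        rw [mul_add, mul_one, mul_div_assoc']
        gcongr
        rw [le_div_iff₀ hm]
        nlinarith
    _ ≤ f x * Real.exp ((W y - W x) / m) := by
        gcongr
        · linarith
        · linarith [Real.add_one_le_exp ((W y - W x) / m)]
  calc Real.exp (-W y / m) * f y ≤ Real.exp (-W y / m) * (f x * Real.exp ((W y - W x) / m)) := by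
        gcongr
    _ = Real.exp (-W x / m) * f x := by
        rw [mul_left_comm, ← Real.exp_add]
        ring_nf

theorem stmt0_general (a b : ℝ) (hab : a < b) (d : ℝ → ℝ)
    (hcont : ContinuousOn d (Icc a b)) (hpos : ∀ x ∈ Icc a b, 0 < d x)
    (hvar : HasFiniteNegVariationOn d (Icc a b)) :
    ∃ φ : ℝ → ℝ, ContinuousOn φ (Icc a b) ∧ (∀ x ∈ Icc a b, 0 < φ x) ∧
      AntitoneOn φ (Icc a b) ∧ AntitoneOn (fun x => φ x * d x) (Icc a b) := by
  have haI : a ∈ Icc a b := left_mem_Icc.2 hab.le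
  obtain ⟨z, hz, hzmin⟩ := isCompact_Icc.exists_isMinOn ⟨a, haI⟩ hcont
  have hBV : BoundedVariationOn d (Icc a b) := hvar.boundedVariationOn
    (isCompact_Icc.bddAbove_image hcont) (isCompact_Icc.bddBelow_image hcont)
  have hloc := hBV.locallyBoundedVariationOn
  have hm : 0 < d z := hpos z hz
  set V := variationOnFromTo d (Icc a b) a
  refine ⟨fun x => Real.exp (-V x / d z), ?_, fun x _ => Real.exp_pos _, ?_, ?_⟩
  · exact Real.continuous_exp.comp_continuousOn
      ((hBV.continuousOn_variationOnFromTo haI hcont).neg.div_const _)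
  · intro x hx y hy hxy
    have hV := variationOnFromTo.monotoneOn hloc haI hx hy hxy
    dsimp only
    gcongr
  · exact antitoneOn_exp_neg_div_mul hm (fun x hx => hzmin hx)
      fun x hx y hy => variationOnFromTo.abs_sub_le_sub_of_le hloc haI hx hy

theorem stmt0 (a b : ℝ) (ha : 0 < a) (hab : a < b) (d : ℝ → ℝ)
    (hcont : ContinuousOn d (Icc a b)) (hpos : ∀ x ∈ Icc a b, 0 < d x)
    (hvar : HasFiniteNegVariationOn d (Icc a b)) :
    ∃ φ : ℝ → ℝ, ContinuousOn φ (Icc a b) ∧ (∀ x ∈ Icc a b, 0 < φ x) ∧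
      AntitoneOn φ (Icc a b) ∧ AntitoneOn (fun x => φ x * d x) (Icc a b) :=
  stmt0_general a b hab d hcont hpos hvar
end

section
/- Let n₀ > 0 and let d : [n₀,∞) → (0,∞) be a continuous function such that the composition log ∘ d has finite negative variation on [n₀,∞). Then there exists a continuous function φ : [n₀,∞) → (0,∞) such that both φ and the product function x ↦ φ(x)·d(x) are non-increasing on [n₀,∞). -/
open Set

namespace NegVarAux

noncomputable section

def pterm (f : ℝ → ℝ) (x y : ℝ) : ℝ := max (f x - f y) 0

def psum (f : ℝ → ℝ) (k : ℕ) (t : ℕ → ℝ) : ℝ :=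
  ∑ i ∈ Finset.range k, pterm f (t i) (t (i + 1))

def IsPart (a b : ℝ) (k : ℕ) (t : ℕ → ℝ) : Prop :=
  t 0 = a ∧ t k = b ∧ ∀ i < k, t i ≤ t (i + 1)

def PS (f : ℝ → ℝ) (a b : ℝ) : Set ℝ := {s | ∃ k t, IsPart a b k t ∧ s = psum f k t}

def nvar (f : ℝ → ℝ) (a b : ℝ) : ℝ := sSup (PS f a b)

variable {f : ℝ → ℝ} {n₀ a b c : ℝ}

lemma pterm_nonneg (x y : ℝ) : 0 ≤ pterm f x y := le_max_right _ _

lemma pterm_self (x : ℝ) : pterm f x x = 0 := by simp [pterm]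

lemma pterm_triangle (x y z : ℝ) : pterm f x z ≤ pterm f x y + pterm f y z := by
  apply max_le
  · calc f x - f z = (f x - f y) + (f y - f z) := by ring
      _ ≤ _ := add_le_add (le_max_left _ _) (le_max_left _ _)
  · exact add_nonneg (le_max_right _ _) (le_max_right _ _)

lemma psum_nonneg (k : ℕ) (t : ℕ → ℝ) : 0 ≤ psum f k t :=
  Finset.sum_nonneg fun _ _ => pterm_nonneg _ _

lemma chain_le {k : ℕ} {t : ℕ → ℝ} (h : ∀ i < k, t i ≤ t (i + 1)) :
    ∀ {i j : ℕ}, i ≤ j → j ≤ k → t i ≤ t j := by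
  intro i j hij hjk
  induction j with
  | zero =>
    obtain rfl : i = 0 := Nat.le_zero.mp hij
    exact le_rfl
  | succ n ih =>
    rcases Nat.lt_or_ge i (n + 1) with hlt | hge
    · exact le_trans (ih (Nat.lt_succ_iff.mp hlt) (by omega)) (h n (by omega))
    · obtain rfl : i = n + 1 := by omega
      exact le_rfl

lemma part_mem {k : ℕ} {t : ℕ → ℝ} (h : IsPart a b k t) :
    ∀ i ≤ k, a ≤ t i ∧ t i ≤ b := by
  intro i hi
  constructor
  · rw [← h.1]; exact chain_le h.2.2 (Nat.zero_le i) hi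
  · rw [← h.2.1]; exact chain_le h.2.2 hi le_rfl

lemma part_le {k : ℕ} {t : ℕ → ℝ} (h : IsPart a b k t) : a ≤ b := by
  have := (part_mem h k le_rfl).1
  rwa [h.2.1] at this

lemma exists_strict {a b : ℝ} : ∀ (k : ℕ) (t : ℕ → ℝ), IsPart a b k t →
    ∃ k' t', t' 0 = a ∧ t' k' = b ∧ (∀ i < k', t' i < t' (i + 1)) ∧
      psum f k' t' = psum f k t := by
  intro k
  induction k using Nat.strong_induction_on with
  | _ k ih =>
    intro t ht
    by_cases hs : ∀ i < k, t i < t (i + 1)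
    · exact ⟨k, t, ht.1, ht.2.1, hs, rfl⟩
    · push_neg at hs
      obtain ⟨j, hj, hle⟩ := hs
      have heq : t j = t (j + 1) := le_antisymm (ht.2.2 j hj) hle
      have hk1 : 1 ≤ k := by omega
      set t'' : ℕ → ℝ := fun i => if i ≤ j then t i else t (i + 1) with ht''def
      have h0 : t'' 0 = a := by simp only [ht''def, if_pos (Nat.zero_le j)]; exact ht.1
      have hkb : t'' (k - 1) = b := by
        by_cases hjk : k - 1 ≤ j
        · have : j = k - 1 := by omega
          simp only [ht''def, if_pos hjk]
          rw [show k - 1 = j from this.symm, heq, show j + 1 = k by omega]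
          exact ht.2.1
        · simp only [ht''def, if_neg hjk]
          rw [show k - 1 + 1 = k by omega]
          exact ht.2.1
      have hmono : ∀ i < k - 1, t'' i ≤ t'' (i + 1) := by
        intro i hi
        by_cases h1 : i + 1 ≤ j
        · simp only [ht''def, if_pos h1, if_pos (by omega : i ≤ j)]
          exact ht.2.2 i (by omega)
        · by_cases h2 : i ≤ j
          · have : i = j := by omega
            simp only [ht''def, if_pos h2, if_neg h1]
            rw [this, heq]
            exact ht.2.2 (j + 1) (by omega)
          · simp only [ht''def, if_neg h2, if_neg h1]
            exact ht.2.2 (i + 1) (by omega)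
      have hsum : psum f (k - 1) t'' = psum f k t := by
        have hA : ∀ i ∈ Finset.Ico 0 j, pterm f (t'' i) (t'' (i + 1))
            = pterm f (t i) (t (i + 1)) := by
          intro i hi
          simp only [Finset.mem_Ico] at hi
          simp only [ht''def, if_pos (by omega : i ≤ j), if_pos (by omega : i + 1 ≤ j)]
        have hB : ∀ i ∈ Finset.Ico j (k - 1), pterm f (t'' i) (t'' (i + 1))
            = pterm f (t (i + 1)) (t (i + 2)) := by
          intro i hi
          simp only [Finset.mem_Ico] at hi
          by_cases h1 : i = j
          · subst h1
            simp only [ht''def, if_pos le_rfl, if_neg (by omega : ¬ i + 1 ≤ i), heq]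
          · simp only [ht''def, if_neg (by omega : ¬ i ≤ j), if_neg (by omega : ¬ i + 1 ≤ j)]
        have hj1 : j ≤ k - 1 := by omega
        calc psum f (k - 1) t''
            = ∑ i ∈ Finset.Ico 0 j, pterm f (t'' i) (t'' (i + 1))
              + ∑ i ∈ Finset.Ico j (k - 1), pterm f (t'' i) (t'' (i + 1)) := by
              rw [psum, Finset.range_eq_Ico, ← Finset.sum_Ico_consecutive _ (Nat.zero_le j) hj1]
          _ = ∑ i ∈ Finset.Ico 0 j, pterm f (t i) (t (i + 1))
              + ∑ i ∈ Finset.Ico (j + 1) k, pterm f (t i) (t (i + 1)) := by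
              rw [Finset.sum_congr rfl hA, Finset.sum_congr rfl hB]
              congr 1
              rw [Finset.sum_Ico_eq_sum_range, Finset.sum_Ico_eq_sum_range,
                show k - 1 - j = k - (j + 1) from by omega]
              refine Finset.sum_congr rfl fun i _ => ?_
              rw [show j + 1 + i = j + i + 1 from by omega,
                show j + i + 1 + 1 = j + i + 2 from by omega]
          _ = psum f k t := by
              rw [psum, Finset.range_eq_Ico,
                ← Finset.sum_Ico_consecutive _ (Nat.zero_le j) (by omega : j ≤ k),
                Finset.sum_eq_sum_Ico_succ_bot (by omega : j < k)]
              rw [show pterm f (t j) (t (j + 1)) = 0 from by rw [heq]; exact pterm_self _]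
              ring
      obtain ⟨k', t', h1, h2, h3, h4⟩ := ih (k - 1) (by omega) t'' ⟨h0, hkb, hmono⟩
      exact ⟨k', t', h1, h2, h3, h4.trans hsum⟩

lemma PS_bddAbove (hvar : HasFiniteNegVariationOn f (Ici n₀)) (ha : n₀ ≤ a) :
    BddAbove (PS f a b) := by
  obtain ⟨M, hM⟩ := hvar
  refine ⟨M, fun s hs => ?_⟩
  obtain ⟨k, t, ht, rfl⟩ := hs
  obtain ⟨k', t', h0, hk, hstrict, hsum⟩ := exists_strict k t ht
  rw [← hsum]
  apply hM
  refine ⟨k', t', hstrict, fun i hi => ?_, rfl⟩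
  exact le_trans ha ((part_mem ⟨h0, hk, fun i hi => (hstrict i hi).le⟩ i hi).1)

lemma pterm_mem_PS (hab : a ≤ b) : pterm f a b ∈ PS f a b := by
  refine ⟨1, fun i => if i = 0 then a else b, ⟨by simp, by norm_num, ?_⟩, ?_⟩
  · intro i hi
    obtain rfl : i = 0 := by omega
    simpa using hab
  · rw [psum, Finset.sum_range_one]
    norm_num

lemma PS_nonempty (hab : a ≤ b) : (PS f a b).Nonempty := ⟨_, pterm_mem_PS hab⟩

lemma pterm_le_nvar (hvar : HasFiniteNegVariationOn f (Ici n₀)) (ha : n₀ ≤ a)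
    (hab : a ≤ b) : pterm f a b ≤ nvar f a b :=
  le_csSup (PS_bddAbove hvar ha) (pterm_mem_PS hab)

lemma nvar_nonneg (hvar : HasFiniteNegVariationOn f (Ici n₀)) (ha : n₀ ≤ a)
    (hab : a ≤ b) : 0 ≤ nvar f a b :=
  le_trans (pterm_nonneg a b) (pterm_le_nvar hvar ha hab)

lemma mem_concat (hab : a ≤ b) (hbc : b ≤ c) {s₁ s₂ : ℝ}
    (h₁ : s₁ ∈ PS f a b) (h₂ : s₂ ∈ PS f b c) : s₁ + s₂ ∈ PS f a c := by
  obtain ⟨k, t, ht, rfl⟩ := h₁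
  obtain ⟨l, u, hu, rfl⟩ := h₂
  set v : ℕ → ℝ := fun i => if i ≤ k then t i else u (i - k) with hvdef
  have hv0 : ∀ i ≤ k, v i = t i := fun i hi => by simp only [hvdef]; rw [if_pos hi]
  have hv1 : ∀ m : ℕ, v (k + m) = u m := by
    intro m
    by_cases h2 : k + m ≤ k
    · obtain rfl : m = 0 := by omega
      simp only [hvdef]
      rw [if_pos h2, Nat.add_zero, ht.2.1, ← hu.1]
    · simp only [hvdef]
      rw [if_neg h2, show k + m - k = m by omega]
  refine ⟨k + l, v, ⟨?_, ?_, ?_⟩, ?_⟩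
  · rw [hv0 0 (Nat.zero_le k), ht.1]
  · rw [hv1 l, hu.2.1]
  · intro i hi
    by_cases h1 : i < k
    · rw [hv0 i (by omega), hv0 (i + 1) (by omega)]
      exact ht.2.2 i h1
    · have hik : k ≤ i := by omega
      rw [show i = k + (i - k) by omega, show k + (i - k) + 1 = k + (i - k + 1) by omega,
        hv1, hv1]
      exact hu.2.2 (i - k) (by omega)
  · have hsplit : psum f (k + l) v = (∑ i ∈ Finset.Ico 0 k, pterm f (v i) (v (i + 1)))
        + ∑ i ∈ Finset.Ico k (k + l), pterm f (v i) (v (i + 1)) := by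
      rw [psum, Finset.range_eq_Ico,
        ← Finset.sum_Ico_consecutive _ (Nat.zero_le k) (by omega : k ≤ k + l)]
    rw [hsplit]
    congr 1
    · rw [psum, Finset.range_eq_Ico]
      refine Finset.sum_congr rfl fun i hi => ?_
      simp only [Finset.mem_Ico] at hi
      rw [hv0 i (by omega), hv0 (i + 1) (by omega)]
    · rw [Finset.sum_Ico_eq_sum_range, show k + l - k = l by omega, psum]
      refine Finset.sum_congr rfl fun i _ => ?_
      rw [show k + i + 1 = k + (i + 1) by omega, hv1 i, hv1 (i + 1)]

lemma nvar_concat (hvar : HasFiniteNegVariationOn f (Ici n₀)) (ha : n₀ ≤ a)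
    (hab : a ≤ b) (hbc : b ≤ c) : nvar f a b + nvar f b c ≤ nvar f a c := by
  have hb : n₀ ≤ b := le_trans ha hab
  have key : ∀ s₁ ∈ PS f a b, ∀ s₂ ∈ PS f b c, s₁ + s₂ ≤ nvar f a c := fun s₁ h₁ s₂ h₂ =>
    le_csSup (PS_bddAbove hvar ha) (mem_concat hab hbc h₁ h₂)
  have h1 : nvar f a b ≤ nvar f a c - nvar f b c := by
    refine csSup_le (PS_nonempty hab) fun s₁ hs₁ => ?_
    have h2 : nvar f b c ≤ nvar f a c - s₁ :=
      csSup_le (PS_nonempty hbc) fun s₂ hs₂ => by linarith [key s₁ hs₁ s₂ hs₂]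
    linarith
  linarith

lemma nvar_split (hvar : HasFiniteNegVariationOn f (Ici n₀)) (ha : n₀ ≤ a)
    (hab : a ≤ b) (hbc : b ≤ c) : nvar f a c ≤ nvar f a b + nvar f b c := by
  have hb : n₀ ≤ b := le_trans ha hab
  refine csSup_le (PS_nonempty (le_trans hab hbc)) fun s hs => ?_
  obtain ⟨k, t, ht, rfl⟩ := hs
  set t' : ℕ → ℝ := fun i => min (t i) b with ht'def
  set u : ℕ → ℝ := fun i => max (t i) b with hudef
  have ht'i : ∀ i, t' i = min (t i) b := fun i => rfl
  have hui : ∀ i, u i = max (t i) b := fun i => rfl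
  have h₁ : psum f k t' ∈ PS f a b := by
    refine ⟨k, t', ⟨?_, ?_, ?_⟩, rfl⟩
    · rw [ht'i, ht.1, min_eq_left hab]
    · rw [ht'i, ht.2.1, min_eq_right hbc]
    · intro i hi
      rw [ht'i, ht'i]
      exact min_le_min_right b (ht.2.2 i hi)
  have h₂ : psum f k u ∈ PS f b c := by
    refine ⟨k, u, ⟨?_, ?_, ?_⟩, rfl⟩
    · rw [hui, ht.1, max_eq_right hab]
    · rw [hui, ht.2.1, max_eq_left hbc]
    · intro i hi
      rw [hui, hui]
      exact max_le_max_right b (ht.2.2 i hi)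
  have hterm : psum f k t ≤ psum f k t' + psum f k u := by
    rw [psum, psum, psum, ← Finset.sum_add_distrib]
    refine Finset.sum_le_sum fun i hi => ?_
    simp only [Finset.mem_range] at hi
    rw [ht'i, ht'i, hui, hui]
    rcases le_total (t i) b with hib | hib <;> rcases le_total (t (i + 1)) b with hib2 | hib2
    · rw [min_eq_left hib, min_eq_left hib2, max_eq_right hib, max_eq_right hib2, pterm_self]
      linarith [pterm_nonneg (f := f) (t i) (t (i + 1))]
    · rw [min_eq_left hib, min_eq_right hib2, max_eq_right hib, max_eq_left hib2]
      exact pterm_triangle _ _ _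
    · have h5 : t i = b := le_antisymm (le_trans (ht.2.2 i hi) hib2) hib
      have h6 : t (i + 1) = b := le_antisymm hib2 (le_trans hib (ht.2.2 i hi))
      simp [h5, h6, pterm_self]
    · rw [min_eq_right hib, min_eq_right hib2, max_eq_left hib, max_eq_left hib2, pterm_self]
      linarith [pterm_nonneg (f := f) (t i) (t (i + 1))]
  calc psum f k t ≤ _ := hterm
    _ ≤ nvar f a b + nvar f b c :=
      add_le_add (le_csSup (PS_bddAbove hvar ha) h₁) (le_csSup (PS_bddAbove hvar hb) h₂)

lemma nvar_add (hvar : HasFiniteNegVariationOn f (Ici n₀)) (ha : n₀ ≤ a)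
    (hab : a ≤ b) (hbc : b ≤ c) : nvar f a c = nvar f a b + nvar f b c :=
  le_antisymm (nvar_split hvar ha hab hbc) (nvar_concat hvar ha hab hbc)

lemma nvar_mono (hvar : HasFiniteNegVariationOn f (Ici n₀)) (ha : n₀ ≤ a)
    (hab : a ≤ b) : nvar f n₀ a ≤ nvar f n₀ b := by
  rw [nvar_add hvar le_rfl ha hab]
  linarith [nvar_nonneg hvar ha hab]

lemma nvar_right {x : ℝ} (hvar : HasFiniteNegVariationOn f (Ici n₀))
    (hf : ContinuousOn f (Ici n₀)) (hx : n₀ ≤ x) {ε : ℝ} (hε : 0 < ε) :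
    ∃ δ > 0, ∀ s, x ≤ s → s - x < δ → nvar f x s ≤ ε := by
  set y := x + 1 with hydef
  have hxy : x ≤ y := by linarith
  obtain ⟨δ₁, hδ₁, hf₁⟩ := Metric.continuousWithinAt_iff.mp (hf x hx) (ε / 4) (by linarith)
  obtain ⟨s0, hs0mem, hs0⟩ : ∃ s0 ∈ PS f x y, nvar f x y - ε / 4 < s0 :=
    exists_lt_of_lt_csSup (PS_nonempty hxy)
      (show nvar f x y - ε / 4 < nvar f x y by linarith)
  obtain ⟨k0, t0, ht0, rfl⟩ := hs0mem
  obtain ⟨k, t, h0, hk, hstrict, hsum⟩ := exists_strict k0 t0 ht0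
  obtain ⟨m, rfl⟩ : ∃ m, k = m + 1 := by
    rcases k with _ | m
    · exfalso; rw [h0] at hk; linarith [hk]
    · exact ⟨m, rfl⟩
  have ht1 : x < t 1 := by
    rw [← h0]; exact hstrict 0 (by omega)
  have ht1y : t 1 ≤ y := by
    rw [← hk]
    exact chain_le (fun i hi => (hstrict i hi).le) (by omega) le_rfl
  refine ⟨min δ₁ (t 1 - x), by simp [hδ₁]; linarith, fun s hxs hsδ => ?_⟩
  have hsδ₁ : s - x < δ₁ := lt_of_lt_of_le hsδ (min_le_left _ _)
  have hst1 : s ≤ t 1 := by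
    have := lt_of_lt_of_le hsδ (min_le_right _ _)
    linarith
  have hsy : s ≤ y := le_trans hst1 ht1y
  have hfs : |f s - f x| < ε / 4 := by
    have := hf₁ (show s ∈ Ici n₀ from le_trans hx hxs)
      (by rw [Real.dist_eq, abs_of_nonneg (by linarith)]; exact hsδ₁)
    rwa [Real.dist_eq] at this
  -- modified partition of [s, y]
  set u : ℕ → ℝ := fun i => if i = 0 then s else t i with hudef
  have hu0 : u 0 = s := rfl
  have hui : ∀ i, i ≠ 0 → u i = t i := fun i hi => by simp only [hudef]; rw [if_neg hi]
  have humem : psum f (m + 1) u ∈ PS f s y := by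
    refine ⟨m + 1, u, ⟨hu0, ?_, ?_⟩, rfl⟩
    · rw [hui (m + 1) (by omega)]; exact hk
    · intro i hi
      rcases Nat.eq_zero_or_pos i with rfl | hipos
      · rw [hu0, hui 1 (by omega)]; exact hst1
      · rw [hui i (by omega), hui (i + 1) (by omega)]
        exact (hstrict i hi).le
  have hpsum : psum f (m + 1) u = psum f (m + 1) t - pterm f x (t 1) + pterm f s (t 1) := by
    rw [psum, psum, Finset.sum_range_succ', Finset.sum_range_succ']
    have he : ∀ i ∈ Finset.range m, pterm f (u (i + 1)) (u (i + 1 + 1))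
        = pterm f (t (i + 1)) (t (i + 1 + 1)) := fun i _ => by
      rw [hui (i + 1) (by omega), hui (i + 1 + 1) (by omega)]
    rw [Finset.sum_congr rfl he, hu0, hui 1 (by omega), h0]
    ring
  have htri : pterm f x (t 1) ≤ pterm f x s + pterm f s (t 1) := pterm_triangle _ _ _
  have hxs' : pterm f x s ≤ ε / 4 := by
    apply max_le _ (by linarith)
    rw [abs_sub_comm] at hfs
    calc f x - f s ≤ |f x - f s| := le_abs_self _
      _ ≤ ε / 4 := hfs.le
  have h1 : nvar f s y ≥ psum f (m + 1) t - ε / 4 := by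
    have h0' : psum f (m + 1) u ≤ nvar f s y :=
      le_csSup (PS_bddAbove hvar (le_trans hx hxs)) humem
    linarith
  have h2 : nvar f x s + nvar f s y = nvar f x y := (nvar_add hvar hx hxs hsy).symm
  rw [hsum] at h1
  linarith

lemma nvar_left {x : ℝ} (hvar : HasFiniteNegVariationOn f (Ici n₀))
    (hf : ContinuousOn f (Ici n₀)) (hx : n₀ ≤ x) {ε : ℝ} (hε : 0 < ε) :
    ∃ δ > 0, ∀ s, n₀ ≤ s → s ≤ x → x - s < δ → nvar f n₀ x - nvar f n₀ s ≤ ε := by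
  rcases eq_or_lt_of_le hx with rfl | hx'
  · exact ⟨1, one_pos, fun s hs1 hs2 _ => by
      have : s = n₀ := le_antisymm hs2 hs1
      subst this; simp [hε.le]⟩
  obtain ⟨δ₁, hδ₁, hf₁⟩ := Metric.continuousWithinAt_iff.mp (hf x hx) (ε / 4) (by linarith)
  obtain ⟨s0, hs0mem, hs0⟩ : ∃ s0 ∈ PS f n₀ x, nvar f n₀ x - ε / 4 < s0 :=
    exists_lt_of_lt_csSup (PS_nonempty hx)
      (show nvar f n₀ x - ε / 4 < nvar f n₀ x by linarith)
  obtain ⟨k0, t0, ht0, rfl⟩ := hs0mem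
  obtain ⟨k, t, h0, hk, hstrict, hsum⟩ := exists_strict k0 t0 ht0
  obtain ⟨m, rfl⟩ : ∃ m, k = m + 1 := by
    rcases k with _ | m
    · exfalso; rw [h0] at hk; linarith [hk]
    · exact ⟨m, rfl⟩
  have htm : t m < x := by rw [← hk]; exact hstrict m (by omega)
  refine ⟨min δ₁ (x - t m), by simp [hδ₁]; linarith, fun s hs1 hs2 hsδ => ?_⟩
  have hsδ₁ : x - s < δ₁ := lt_of_lt_of_le hsδ (min_le_left _ _)
  have htms : t m ≤ s := by
    have := lt_of_lt_of_le hsδ (min_le_right _ _)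
    linarith
  have hfs : |f s - f x| < ε / 4 := by
    have := hf₁ hs1 (by rw [Real.dist_eq, abs_of_nonpos (by linarith)]; linarith)
    rwa [Real.dist_eq] at this
  set u : ℕ → ℝ := fun i => if i = m + 1 then s else t i with hudef
  have hui : ∀ i, i ≠ m + 1 → u i = t i := fun i hi => by simp only [hudef]; rw [if_neg hi]
  have huk : u (m + 1) = s := by simp [hudef]
  have humem : psum f (m + 1) u ∈ PS f n₀ s := by
    refine ⟨m + 1, u, ⟨?_, huk, ?_⟩, rfl⟩
    · rw [hui 0 (by omega)]; exact h0
    · intro i hi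
      rcases Nat.lt_or_ge i m with him | him
      · rw [hui i (by omega), hui (i + 1) (by omega)]
        exact (hstrict i (by omega)).le
      · obtain rfl : i = m := by omega
        rw [hui i (by omega), huk]
        exact htms
  have hpsum : psum f (m + 1) u = psum f (m + 1) t - pterm f (t m) x + pterm f (t m) s := by
    rw [psum, psum, Finset.sum_range_succ, Finset.sum_range_succ]
    have he : ∀ i ∈ Finset.range m, pterm f (u i) (u (i + 1))
        = pterm f (t i) (t (i + 1)) := fun i hi => by
      simp only [Finset.mem_range] at hi
      rw [hui i (by omega), hui (i + 1) (by omega)]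
    rw [Finset.sum_congr rfl he, hui m (by omega), huk]
    have : t (m + 1) = x := hk
    rw [this]
    ring
  have htri : pterm f (t m) x ≤ pterm f (t m) s + pterm f s x := pterm_triangle _ _ _
  have hxs' : pterm f s x ≤ ε / 4 := by
    apply max_le _ (by linarith)
    calc f s - f x ≤ |f s - f x| := le_abs_self _
      _ ≤ ε / 4 := hfs.le
  have h1 : nvar f n₀ s ≥ psum f (m + 1) t - ε / 4 := by
    have h0' : psum f (m + 1) u ≤ nvar f n₀ s :=
      le_csSup (PS_bddAbove hvar le_rfl) humem
    linarith
  rw [hsum] at h1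
  linarith

lemma nvar_continuousOn (hvar : HasFiniteNegVariationOn f (Ici n₀))
    (hf : ContinuousOn f (Ici n₀)) :
    ContinuousOn (fun x => nvar f n₀ x) (Ici n₀) := by
  intro x hx
  rw [Metric.continuousWithinAt_iff]
  intro ε hε
  obtain ⟨δr, hδr, hr⟩ := nvar_right hvar hf hx (show (0:ℝ) < ε / 2 by linarith)
  obtain ⟨δl, hδl, hl⟩ := nvar_left hvar hf hx (show (0:ℝ) < ε / 2 by linarith)
  refine ⟨min δr δl, lt_min hδr hδl, fun s hs hdist => ?_⟩
  rw [Real.dist_eq] at hdist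
  rw [Real.dist_eq]
  have hd1 : |s - x| < δr := lt_of_lt_of_le hdist (min_le_left _ _)
  have hd2 : |s - x| < δl := lt_of_lt_of_le hdist (min_le_right _ _)
  rcases le_total s x with hsx | hsx
  · have h1 : nvar f n₀ x - nvar f n₀ s ≤ ε / 2 :=
      hl s hs hsx (by rw [abs_of_nonpos (by linarith)] at hd2; linarith)
    have h2 : nvar f n₀ s ≤ nvar f n₀ x := nvar_mono hvar hs hsx
    rw [abs_of_nonpos (by linarith)]
    linarith
  · have h1 : nvar f x s ≤ ε / 2 :=
      hr s hsx (by rw [abs_of_nonneg (by linarith)] at hd1; linarith)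
    have h2 : nvar f n₀ s = nvar f n₀ x + nvar f x s := nvar_add hvar le_rfl hx hsx
    have h3 : 0 ≤ nvar f x s := nvar_nonneg hvar hx hsx
    rw [abs_of_nonneg (by linarith)]
    linarith

end

end NegVarAux

open NegVarAux

theorem stmt1 (n₀ : ℝ) (hn₀ : 0 < n₀) (d : ℝ → ℝ)
    (hcont : ContinuousOn d (Ici n₀)) (hpos : ∀ x ∈ Ici n₀, 0 < d x)
    (hvar : HasFiniteNegVariationOn (fun x => Real.log (d x)) (Ici n₀)) :
    ∃ φ : ℝ → ℝ, ContinuousOn φ (Ici n₀) ∧ (∀ x ∈ Ici n₀, 0 < φ x) ∧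
      AntitoneOn φ (Ici n₀) ∧ AntitoneOn (fun x => φ x * d x) (Ici n₀) := by
  set f : ℝ → ℝ := fun x => Real.log (d x) with hfdef
  have hf : ContinuousOn f (Ici n₀) := hcont.log fun x hx => (hpos x hx).ne'
  have hN : ContinuousOn (fun x => nvar f n₀ x) (Ici n₀) := nvar_continuousOn hvar hf
  refine ⟨fun x => Real.exp (-(f x + nvar f n₀ x)), ?_, ?_, ?_, ?_⟩
  · exact Real.continuous_exp.comp_continuousOn ((hf.add hN).neg)
  · exact fun x _ => Real.exp_pos _
  · intro x hx y hy hxy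
    show Real.exp (-(f y + nvar f n₀ y)) ≤ Real.exp (-(f x + nvar f n₀ x))
    rw [Real.exp_le_exp]
    have hadd : nvar f n₀ y = nvar f n₀ x + nvar f x y := nvar_add hvar le_rfl hx hxy
    have hdrop : pterm f x y ≤ nvar f x y := pterm_le_nvar hvar hx hxy
    have hmax : f x - f y ≤ pterm f x y := le_max_left _ _
    linarith
  · intro x hx y hy hxy
    have key : ∀ z ∈ Ici n₀, Real.exp (-(f z + nvar f n₀ z)) * d z
        = Real.exp (-(nvar f n₀ z)) := by
      intro z hz
      have hd : Real.exp (f z) = d z := Real.exp_log (hpos z hz)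
      rw [← hd, ← Real.exp_add]
      congr 1
      ring
    show Real.exp (-(f y + nvar f n₀ y)) * d y ≤ Real.exp (-(f x + nvar f n₀ x)) * d x
    rw [key x hx, key y hy, Real.exp_le_exp]
    have h2 := nvar_mono hvar hx hxy
    linarith
end

section
/- For all x ∈ ℝ^d, −1 ≤ w(x) ≤ 0. -/
/-!
Since `a V ≥ 0`, the equation makes `w` subharmonic on `{w > 0}` and `-w` subharmonic on
`{w < -1}`; as `w → 0` at infinity, the weak maximum principle gives `w ≤ 0` and `-w ≤ 1`.
The maximum principle on `ℝ^d` itself comes from perturbing `f` by `ε ‖x‖²`, whose Laplacian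
`2 d ε` is positive: the perturbed function then has no interior maximum where `f > b`.
-/

open MeasureTheory Filter

/-- The Laplacian of `f : ℝ^d → ℝ`, as the sum of the second partial derivatives. -/
noncomputable def lap {d : ℕ} (f : EuclideanSpace ℝ (Fin d) → ℝ)
    (x : EuclideanSpace ℝ (Fin d)) : ℝ :=
  ∑ i : Fin d, fderiv ℝ (fun y => fderiv ℝ f y (EuclideanSpace.single i 1)) x
    (EuclideanSpace.single i 1)

open Topology

theorem IsLocalMax.deriv_deriv_nonpos {f : ℝ → ℝ} {x₀ : ℝ} (h : IsLocalMax f x₀)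
    (hc : ContinuousAt f x₀) : deriv (deriv f) x₀ ≤ 0 := by
  by_contra! hpos
  have hmin : IsLocalMin f x₀ := isLocalMin_of_deriv_deriv_pos hpos h.deriv_eq_zero hc
  have hconst : f =ᶠ[𝓝 x₀] fun _ => f x₀ := by
    filter_upwards [h, hmin] with x hmax hmin' using le_antisymm hmax hmin'
  have hflat : deriv f =ᶠ[𝓝 x₀] fun _ => 0 := by
    filter_upwards [hconst.eventuallyEq_nhds] with x hx
    rw [hx.deriv_eq, deriv_const]
  rw [hflat.deriv_eq, deriv_const] at hpos
  exact hpos.false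

section Calculus

variable {E F : Type*} [NormedAddCommGroup E] [NormedSpace ℝ E]
  [NormedAddCommGroup F] [NormedSpace ℝ F]

theorem hasDerivAt_comp_line {g : E → F} {y e : E} {t : ℝ}
    (hg : DifferentiableAt ℝ g (y + t • e)) :
    HasDerivAt (fun s : ℝ => g (y + s • e)) (fderiv ℝ g (y + t • e) e) t := by
  have hline : HasDerivAt (fun s : ℝ => y + s • e) e t := by
    simpa using ((hasDerivAt_id t).smul_const e).const_add y
  exact hg.hasFDerivAt.comp_hasDerivAt t hline

theorem ContDiff.differentiable_fderiv_apply {g : E → F} (hg : ContDiff ℝ 2 g) (e : E) :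
    Differentiable ℝ fun z => fderiv ℝ g z e :=
  ((hg.fderiv_right (m := 1) (by norm_num)).differentiable (by norm_num)).clm_apply
    (differentiable_const e)

theorem deriv_deriv_comp_line {g : E → F} (hg : ContDiff ℝ 2 g) (y e : E) :
    deriv (deriv fun t : ℝ => g (y + t • e)) 0 = fderiv ℝ (fun z => fderiv ℝ g z e) y e := by
  have hderiv : deriv (fun t : ℝ => g (y + t • e)) = fun t => fderiv ℝ g (y + t • e) e :=
    funext fun t => (hasDerivAt_comp_line ((hg.differentiable (by norm_num)) _)).deriv
  simpa [hderiv] using (hasDerivAt_comp_line (t := 0) (hg.differentiable_fderiv_apply e _)).deriv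

theorem fderiv_fun_const_mul_field (c : ℝ) (f : E → ℝ) :
    fderiv ℝ (fun z => c * f z) = c • fderiv ℝ f :=
  fderiv_const_smul_field (f := f) c

end Calculus

variable {d : ℕ}

theorem lap_nonpos_of_isLocalMax {g : EuclideanSpace ℝ (Fin d) → ℝ} (hg : ContDiff ℝ 2 g)
    {y : EuclideanSpace ℝ (Fin d)} (h : IsLocalMax g y) : lap g y ≤ 0 := by
  refine Finset.sum_nonpos fun i _ => ?_
  set e : EuclideanSpace ℝ (Fin d) := EuclideanSpace.single i 1
  have hline : Continuous fun t : ℝ => y + t • e := by fun_prop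
  have hmax : IsLocalMax (fun t : ℝ => g (y + t • e)) 0 :=
    IsLocalMax.comp_continuous (g := fun t : ℝ => y + t • e) (by simpa using h) hline.continuousAt
  rw [← deriv_deriv_comp_line hg]
  exact hmax.deriv_deriv_nonpos (hg.continuous.comp hline).continuousAt

theorem lap_const_mul (c : ℝ) (f : EuclideanSpace ℝ (Fin d) → ℝ) (x : EuclideanSpace ℝ (Fin d)) :
    lap (fun z => c * f z) x = c * lap f x := by
  simp only [lap, Finset.mul_sum, fderiv_fun_const_mul_field, Pi.smul_apply,
    smul_apply, smul_eq_mul]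

theorem lap_neg (f : EuclideanSpace ℝ (Fin d) → ℝ) (x : EuclideanSpace ℝ (Fin d)) :
    lap (fun z => -f z) x = -lap f x := by
  simpa using lap_const_mul (-1) f x

theorem lap_add {f g : EuclideanSpace ℝ (Fin d) → ℝ} (hf : ContDiff ℝ 2 f) (hg : ContDiff ℝ 2 g)
    (x : EuclideanSpace ℝ (Fin d)) : lap (fun z => f z + g z) x = lap f x + lap g x := by
  simp only [lap, ← Finset.sum_add_distrib]
  refine Finset.sum_congr rfl fun i _ => ?_
  simp only [fderiv_fun_add (hf.differentiable (by norm_num) _)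
    (hg.differentiable (by norm_num) _), add_apply]
  rw [fderiv_fun_add (hf.differentiable_fderiv_apply _ _) (hg.differentiable_fderiv_apply _ _),
    add_apply]

theorem lap_norm_sq (x : EuclideanSpace ℝ (Fin d)) : lap (fun z => ‖z‖ ^ 2) x = 2 * d := by
  have hgrad : ∀ v : EuclideanSpace ℝ (Fin d),
      (fun z => fderiv ℝ (fun z => ‖z‖ ^ 2) z v) = fun z => 2 * inner ℝ v z := by
    intro v; funext z
    simp [fderiv_norm_sq_apply, real_inner_comm]
  have hinner : ∀ v : EuclideanSpace ℝ (Fin d),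
      fderiv ℝ (fun z => 2 * inner ℝ v z) x v = 2 * ‖v‖ ^ 2 := by
    intro v
    rw [show (fun z => 2 * inner ℝ v z) = ⇑((2 : ℝ) • innerSL ℝ v) from rfl,
      ContinuousLinearMap.fderiv]
    simp
  simp only [lap, hgrad, hinner, PiLp.norm_single, norm_one, one_pow, mul_one,
    Finset.sum_const, Finset.card_univ, Fintype.card_fin, nsmul_eq_mul]
  ring

theorem le_add_mul_sq_of_lap_nonneg (hd : 0 < d) {f : EuclideanSpace ℝ (Fin d) → ℝ}
    (hf : ContDiff ℝ 2 f) {b r R ε : ℝ} (hr : ∀ z, r ≤ ‖z‖ → f z ≤ b)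
    (hlap : ∀ z, b < f z → 0 ≤ lap f z) (hrR : r < R) (hε : 0 < ε)
    {x : EuclideanSpace ℝ (Fin d)} (hx : ‖x‖ ≤ R) : f x ≤ b + ε * R ^ 2 := by
  set g : EuclideanSpace ℝ (Fin d) → ℝ := fun z => f z + ε * ‖z‖ ^ 2
  have hg : ContDiff ℝ 2 g := hf.add (contDiff_const.mul (contDiff_norm_sq ℝ))
  obtain ⟨y, hyR, hymax⟩ :=
    (isCompact_closedBall (0 : EuclideanSpace ℝ (Fin d)) R).exists_isMaxOn
      ⟨x, mem_closedBall_zero_iff.2 hx⟩ hg.continuous.continuousOn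
  rw [mem_closedBall_zero_iff] at hyR
  have hfy : f y ≤ b := by
    by_contra! hby
    have hyr : ‖y‖ < r := by
      by_contra! hry
      exact (hr y hry).not_gt hby
    have hloc : IsLocalMax g y :=
      hymax.isLocalMax (Metric.closedBall_mem_nhds_of_mem (mem_ball_zero_iff.2 (hyr.trans hrR)))
    have hlap_g : lap g y = lap f y + ε * (2 * d) := by
      rw [lap_add hf (contDiff_const.mul (contDiff_norm_sq ℝ)), lap_const_mul, lap_norm_sq]
    have hd' : (0 : ℝ) < d := by exact_mod_cast hd
    nlinarith [lap_nonpos_of_isLocalMax hg hloc, hlap y hby]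
  have hgxy : g x ≤ g y := hymax (mem_closedBall_zero_iff.2 hx)
  have hy2 : ‖y‖ ^ 2 ≤ R ^ 2 := pow_le_pow_left₀ (norm_nonneg y) hyR 2
  simp only [g] at hgxy
  nlinarith [norm_nonneg x]

theorem le_of_lap_nonneg_of_eventually_le (hd : 0 < d) {f : EuclideanSpace ℝ (Fin d) → ℝ}
    (hf : ContDiff ℝ 2 f) {b : ℝ} (hb : ∀ᶠ z in cocompact _, f z ≤ b)
    (hlap : ∀ z, b < f z → 0 ≤ lap f z) (x : EuclideanSpace ℝ (Fin d)) : f x ≤ b := by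
  rw [← Metric.cobounded_eq_cocompact] at hb
  obtain ⟨r, -, hr⟩ := hasBasis_cobounded_norm.eventually_iff.1 hb
  set R := max r ‖x‖ + 1
  have hR : 0 < R := by positivity
  refine le_of_forall_pos_le_add fun δ hδ => ?_
  have key := le_add_mul_sq_of_lap_nonneg hd hf hr hlap (r := r) (R := R) (by grind)
    (div_pos hδ (pow_pos hR 2)) (x := x) (by grind)
  rwa [div_mul_cancel₀ _ (pow_pos hR 2).ne'] at key

theorem le_of_lap_nonneg_of_tendsto (hd : 0 < d) {f : EuclideanSpace ℝ (Fin d) → ℝ}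
    (hf : ContDiff ℝ 2 f) {L b : ℝ} (hlim : Tendsto f (cocompact _) (𝓝 L)) (hLb : L ≤ b)
    (hlap : ∀ z, b < f z → 0 ≤ lap f z) (x : EuclideanSpace ℝ (Fin d)) : f x ≤ b := by
  refine le_of_forall_gt_imp_ge_of_dense fun b' hb' => ?_
  refine le_of_lap_nonneg_of_eventually_le hd hf ?_ (fun z hz => hlap z (hb'.trans hz)) x
  exact hlim.eventually (eventually_le_nhds (hLb.trans_lt hb'))

theorem stmt6_general (d : ℕ) (hd : 3 ≤ d) (V : EuclideanSpace ℝ (Fin d) → ℝ)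
    (hV0 : ∀ x, 0 ≤ V x)
    (a : ℝ) (ha : 0 < a)
    (w : EuclideanSpace ℝ (Fin d) → ℝ) (hw : ContDiff ℝ 2 w)
    (hweq : ∀ x, lap w x = a * V x * (1 + w x))
    (hwlim : Tendsto w (cocompact (EuclideanSpace ℝ (Fin d))) (nhds 0)) :
    ∀ x, -1 ≤ w x ∧ w x ≤ 0 := by
  have hd0 : 0 < d := by omega
  have hcoef : ∀ x, 0 ≤ a * V x := fun x => mul_nonneg ha.le (hV0 x)
  intro x
  constructor
  · have hneg := le_of_lap_nonneg_of_tendsto hd0 hw.neg hwlim.neg (b := 1) (by norm_num)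
      (fun z hz => by
        rw [lap_neg, hweq]
        nlinarith [hcoef z]) x
    linarith
  · exact le_of_lap_nonneg_of_tendsto hd0 hw hwlim le_rfl
      (fun z hz => by rw [hweq]; nlinarith [hcoef z]) x

theorem stmt6 (d : ℕ) (hd : 3 ≤ d) (V : EuclideanSpace ℝ (Fin d) → ℝ)
    (hV0 : ∀ x, 0 ≤ V x) (hVhold : ∃ (C r : NNReal), 0 < r ∧ HolderWith C r V)
    (hVsupp : HasCompactSupport V) (hVint : ∫ x, V x = 1)
    (a : ℝ) (ha : 0 < a)
    (w : EuclideanSpace ℝ (Fin d) → ℝ) (hw : ContDiff ℝ 2 w)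
    (hweq : ∀ x, lap w x = a * V x * (1 + w x))
    (hwlim : Tendsto w (cocompact (EuclideanSpace ℝ (Fin d))) (nhds 0)) :
    ∀ x, -1 ≤ w x ∧ w x ≤ 0 :=
  stmt6_general d hd V hV0 a ha w hw hweq hwlim
end

section
/- Let w : (0,∞) × ℝ^d → ℝ be such that for each a > 0 the function w(a,·) is twice continuously differentiable, satisfies Δ_x w(a,x) = a V(x)(1 + w(a,x)) for all x ∈ ℝ^d, and w(a,x) → 0 as |x| → ∞. Then for each fixed x ∈ ℝ^d the map a ↦ w(a,x) is differentiable on (0,∞), and its derivative v(a,x) = ∂w/∂a (a,x) satisfies a^{−1} w(a,x) ≤ v(a,x) ≤ 0 for all a > 0 and x ∈ ℝ^d. -/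
/-!
Everything rests on a maximum principle: a `C²` function `u` on `ℝ^d` that tends to a
nonpositive limit at infinity and satisfies `Δu ≥ 0` wherever `u > 0` is nonpositive. To see
this, perturb `u` by `ε` times the barrier `-(1 + |x|²)^(-1/2)`, which is strictly subharmonic
when `d ≥ 3`; the perturbation attains a positive maximum, where its Laplacian would be both
`≤ 0` and `> 0`.

Applied to suitable linear combinations of solutions, and using `V ≥ 0`, the maximum principle
shows that `w a ≥ -1` and that, for fixed `x`, the function `f a = w a x` is antitone and convex
while `g a = f a / a` is monotone and concave. Then `f = a g` forces `f` to be differentiable: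
convexity of `f` gives `f'₋ ≤ f'₊`, while `f'₊ = g + a g'₊ ≤ g + a g'₋ = f'₋` by concavity of
`g`. Finally `f' ≤ 0` since `f` is antitone and `f' = g + a g'₊ ≥ g = f / a` since `g` is monotone.
-/

open MeasureTheory Filter

open Set Topology Laplacian InnerProductSpace Module

theorem IsLocalMax.deriv_deriv_nonpos_s9 {g : ℝ → ℝ} {t : ℝ} (h : IsLocalMax g t)
    (hg : ContinuousAt g t) : deriv (deriv g) t ≤ 0 := by
  by_contra! hpos
  have hmin : IsLocalMin g t := isLocalMin_of_deriv_deriv_pos hpos h.deriv_eq_zero hg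
  have hconst : g =ᶠ[𝓝 t] fun _ => g t := by
    filter_upwards [h, hmin] with s hs hs' using le_antisymm hs hs'
  have : deriv g =ᶠ[𝓝 t] fun _ => 0 := by
    filter_upwards [hconst.eventuallyEq_nhds] with s hs
    rw [hs.deriv_eq, deriv_const]
  rw [this.deriv_eq, deriv_const] at hpos
  exact hpos.false

theorem ConvexOn.hasDerivAt_of_concaveOn_div {f : ℝ → ℝ} (hf : ConvexOn ℝ (Ioi 0) f)
    (hg : ConcaveOn ℝ (Ioi 0) (fun s => f s / s)) {a : ℝ} (ha : 0 < a) :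
    HasDerivAt f (f a / a + a * derivWithin (fun s => f s / s) (Ioi a) a) a := by
  set g : ℝ → ℝ := fun s => f s / s
  have hint : a ∈ interior (Ioi (0 : ℝ)) := by rwa [interior_Ioi]
  have hgR : HasDerivWithinAt g (derivWithin g (Ioi a) a) (Ioi a) a := by
    simpa using (hg.neg.differentiableWithinAt_Ioi_of_mem_interior hint).neg.hasDerivWithinAt
  have hgL : HasDerivWithinAt g (derivWithin g (Iio a) a) (Iio a) a := by
    simpa using (hg.neg.differentiableWithinAt_Iio_of_mem_interior hint).neg.hasDerivWithinAt
  have hgLR : derivWithin g (Ioi a) a ≤ derivWithin g (Iio a) a := by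
    simpa [derivWithin.neg] using hg.neg.leftDeriv_le_rightDeriv_of_mem_interior hint
  have hfg : ∀ s, 0 < s → s * g s = f s := fun s hs => mul_div_cancel₀ _ hs.ne'
  have hfR : HasDerivWithinAt f (g a + a * derivWithin g (Ioi a) a) (Ioi a) a := by
    refine (((hasDerivWithinAt_id a _).mul hgR).congr_of_eventuallyEq ?_
      (hfg a ha).symm).congr_deriv (by simp)
    filter_upwards [self_mem_nhdsWithin] with s hs using (hfg s (ha.trans hs)).symm
  have hfL : HasDerivWithinAt f (g a + a * derivWithin g (Iio a) a) (Iio a) a := by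
    refine (((hasDerivWithinAt_id a _).mul hgL).congr_of_eventuallyEq ?_
      (hfg a ha).symm).congr_deriv (by simp)
    filter_upwards [Ioo_mem_nhdsLT ha] with s hs using (hfg s hs.1).symm
  have hfLR := hf.leftDeriv_le_rightDeriv_of_mem_interior hint
  rw [hfR.derivWithin (uniqueDiffWithinAt_Ioi a),
    hfL.derivWithin (uniqueDiffWithinAt_Iio a)] at hfLR
  have hLR : derivWithin g (Iio a) a = derivWithin g (Ioi a) a :=
    le_antisymm (le_of_mul_le_mul_left (by linarith) ha) hgLR
  rw [hLR] at hfL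
  simpa [Iic_union_Ici] using hfL.Iic_of_Iio.union hfR.Ici_of_Ioi

theorem Filter.Tendsto.smul_add_smul_zero {α : Type*} {l : Filter α} {f g : α → ℝ}
    (hf : Tendsto f l (𝓝 0)) (hg : Tendsto g l (𝓝 0)) (c d : ℝ) :
    Tendsto (c • f + d • g) l (𝓝 0) := by
  have := (hf.const_smul c).add (hg.const_smul d)
  rwa [smul_zero, smul_zero, add_zero] at this

section

variable {E : Type*} [NormedAddCommGroup E]

theorem IsLocalMax.iteratedFDeriv_two_nonpos [NormedSpace ℝ E] {f : E → ℝ} {x : E}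
    (h : IsLocalMax f x) (hf : ContDiff ℝ 2 f) (v : E) : iteratedFDeriv ℝ 2 f x ![v, v] ≤ 0 := by
  set L : ℝ → E := fun t => x + t • v
  have hL : ∀ t, HasDerivAt L v t := fun t => by
    simpa [L] using ((hasDerivAt_id t).smul_const v).const_add x
  have hL0 : L 0 = x := by simp [L]
  have hderiv : deriv (f ∘ L) = fun t => fderiv ℝ f (L t) v := funext fun t =>
    ((hf.differentiable two_ne_zero _).hasFDerivAt.comp_hasDerivAt t (hL t)).deriv
  have hderiv2 : HasDerivAt (fun t => fderiv ℝ f (L t) v) (fderiv ℝ (fderiv ℝ f) x v v) 0 := by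
    have hf' : Differentiable ℝ (fderiv ℝ f) :=
      (hf.fderiv_right (by norm_num)).differentiable one_ne_zero
    have := (hf' (L 0)).hasFDerivAt.comp_hasDerivAt 0 (hL 0)
    rw [hL0] at this
    exact this.clm_apply (hasDerivAt_const 0 v) |>.congr_deriv (by simp)
  have hmax : IsLocalMax (f ∘ L) 0 :=
    IsMaxFilter.comp_tendsto (hL0 ▸ h) ((hL 0).continuousAt.tendsto)
  rw [iteratedFDeriv_two_apply]
  simpa [hderiv, hderiv2.deriv] using
    hmax.deriv_deriv_nonpos_s9 (hf.continuous.continuousAt.comp (hL 0).continuousAt)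

noncomputable def barrier (x : E) : ℝ := -(1 + ‖x‖ ^ 2) ^ (-(1 / 2) : ℝ)

theorem barrier_nonpos (x : E) : barrier x ≤ 0 :=
  neg_nonpos.2 (Real.rpow_nonneg (by positivity) _)

theorem neg_one_le_barrier (x : E) : -1 ≤ barrier x :=
  neg_le_neg (Real.rpow_le_one_of_one_le_of_nonpos (by nlinarith [sq_nonneg ‖x‖]) (by norm_num))

theorem tendsto_barrier_cocompact [ProperSpace E] :
    Tendsto (barrier (E := E)) (cocompact E) (𝓝 0) := by
  have h : Tendsto (fun x : E => 1 + ‖x‖ ^ 2) (cocompact E) atTop :=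
    tendsto_atTop_add_const_left _ 1
      ((tendsto_pow_atTop two_ne_zero).comp tendsto_norm_cocompact_atTop)
  unfold barrier
  simpa using ((tendsto_rpow_neg_atTop (by norm_num : (0:ℝ) < 1 / 2)).comp h).neg

end

variable {E : Type*} [NormedAddCommGroup E] [InnerProductSpace ℝ E]

theorem IsLocalMax.laplacian_nonpos [FiniteDimensional ℝ E] {f : E → ℝ} {x : E}
    (h : IsLocalMax f x) (hf : ContDiff ℝ 2 f) : Δ f x ≤ 0 := by
  rw [laplacian_eq_iteratedFDeriv_stdOrthonormalBasis]
  exact Finset.sum_nonpos fun i _ => h.iteratedFDeriv_two_nonpos hf _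

theorem hasFDerivAt_one_add_norm_sq_rpow (p : ℝ) (x : E) :
    HasFDerivAt (fun y : E => (1 + ‖y‖ ^ 2) ^ p)
      ((p * (1 + ‖x‖ ^ 2) ^ (p - 1)) • (2 • innerSL ℝ x)) x :=
  (Real.hasDerivAt_rpow_const (Or.inl (by positivity))).comp_hasFDerivAt x
    ((hasStrictFDerivAt_norm_sq x).hasFDerivAt.const_add 1)

theorem hasFDerivAt_barrier (x : E) :
    HasFDerivAt barrier ((1 + ‖x‖ ^ 2) ^ (-(3 / 2) : ℝ) • innerSL ℝ x) x := by
  refine (hasFDerivAt_one_add_norm_sq_rpow (-(1 / 2)) x).neg.congr_fderiv ?_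
  have he : (-(1 / 2) : ℝ) - 1 = -(3 / 2) := by norm_num
  ext v
  simp only [he, neg_apply, smul_apply, innerSL_apply_apply, nsmul_eq_mul, smul_eq_mul]
  ring

theorem contDiff_barrier {n : WithTop ℕ∞} : ContDiff ℝ n (barrier (E := E)) :=
  contDiff_iff_contDiffAt.2 fun x =>
    ((Real.contDiffAt_rpow_const_of_ne (by positivity)).comp x
      (contDiff_const.add (contDiff_norm_sq ℝ)).contDiffAt).neg

theorem fderiv_fderiv_barrier_apply (x v : E) :
    fderiv ℝ (fderiv ℝ barrier) x v v = (1 + ‖x‖ ^ 2) ^ (-(3 / 2) : ℝ) * ‖v‖ ^ 2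
      - 3 * (1 + ‖x‖ ^ 2) ^ (-(5 / 2) : ℝ) * inner ℝ x v ^ 2 := by
  have hfderiv : fderiv ℝ barrier = (fun y : E => (1 + ‖y‖ ^ 2) ^ (-(3 / 2) : ℝ)) • ⇑(innerSL ℝ) :=
    funext fun y => (hasFDerivAt_barrier (E := E) y).fderiv
  rw [hfderiv, ((hasFDerivAt_one_add_norm_sq_rpow (-(3 / 2)) x).smul
    (innerSL ℝ).hasFDerivAt).fderiv]
  have he : (-(3 / 2) : ℝ) - 1 = -(5 / 2) := by norm_num
  simp only [he, add_apply, smul_apply, ContinuousLinearMap.smulRight_apply, nsmul_eq_mul,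
    smul_eq_mul]
  rw [innerSL_apply_apply, innerSL_apply_apply, real_inner_self_eq_norm_sq]
  ring

/-- In dimension `n`, `Δ barrier x = (1 + ‖x‖²) ^ (-5/2) * (n + (n - 3) * ‖x‖²)`. -/
theorem laplacian_barrier_pos [FiniteDimensional ℝ E] (hE : 3 ≤ finrank ℝ E) (x : E) :
    0 < Δ (barrier (E := E)) x := by
  rw [laplacian_eq_iteratedFDeriv_stdOrthonormalBasis]
  set b := stdOrthonormalBasis ℝ E
  have hsum : ∑ i, inner ℝ x (b i) ^ 2 = ‖x‖ ^ 2 := by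
    simpa [sq, real_inner_comm, real_inner_self_eq_norm_sq] using b.sum_inner_mul_inner x x
  have hq : 0 < 1 + ‖x‖ ^ 2 := by positivity
  have hsplit :
      (1 + ‖x‖ ^ 2) ^ (-(3 / 2) : ℝ) = (1 + ‖x‖ ^ 2) ^ (-(5 / 2) : ℝ) * (1 + ‖x‖ ^ 2) := by
    rw [← Real.rpow_add_one hq.ne']
    norm_num
  have hn : (3 : ℝ) ≤ finrank ℝ E := by exact_mod_cast hE
  have hpos : 0 < (1 + ‖x‖ ^ 2) ^ (-(5 / 2) : ℝ) * (finrank ℝ E + (finrank ℝ E - 3) * ‖x‖ ^ 2) := by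
    positivity
  simp only [iteratedFDeriv_two_apply, Matrix.cons_val_zero, Matrix.cons_val_one,
    fderiv_fderiv_barrier_apply, b.norm_eq_one, Finset.sum_sub_distrib, ← Finset.mul_sum, hsum,
    one_pow, Finset.sum_const, Finset.card_univ, Fintype.card_fin, nsmul_eq_mul, mul_one, hsplit]
  linear_combination hpos

theorem nonpos_of_tendsto_of_laplacian_nonneg [FiniteDimensional ℝ E] (hE : 3 ≤ finrank ℝ E)
    {u : E → ℝ} (hu : ContDiff ℝ 2 u) {c : ℝ} (hc : c ≤ 0)
    (hlim : Tendsto u (cocompact E) (𝓝 c)) (hΔ : ∀ x, 0 < u x → 0 ≤ Δ u x) (x : E) :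
    u x ≤ 0 := by
  by_contra! hx
  set ε := u x / 2 with hε
  have hε0 : 0 < ε := by positivity
  set v := u + ε • barrier
  have hv : ContDiff ℝ 2 v := hu.add (contDiff_barrier.const_smul ε)
  have hvx : ε ≤ v x := by
    have := neg_one_le_barrier x
    simp only [v, Pi.add_apply, Pi.smul_apply, smul_eq_mul]
    nlinarith [hε]
  have hvlim : Tendsto v (cocompact E) (𝓝 c) := by
    have := hlim.add (tendsto_barrier_cocompact.const_smul ε)
    rwa [smul_zero, add_zero] at this
  obtain ⟨x₀, hx₀⟩ := hv.continuous.exists_forall_ge' x <|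
    (hvlim.eventually_lt_const (hc.trans_lt hε0)).mono fun y hy => hy.le.trans hvx
  have hux₀ : 0 < u x₀ := by
    have hεb := mul_nonpos_of_nonneg_of_nonpos hε0.le (barrier_nonpos x₀)
    have hvx₀ := hvx.trans (hx₀ x)
    simp only [v, Pi.add_apply, Pi.smul_apply, smul_eq_mul] at hvx₀
    linarith
  have hΔv : Δ v x₀ = Δ u x₀ + ε * Δ (barrier : E → ℝ) x₀ := by
    rw [hu.contDiffAt.laplacian_add (f₂ := ε • barrier) (contDiff_barrier.const_smul ε).contDiffAt,
      laplacian_smul _ contDiff_barrier.contDiffAt, smul_eq_mul]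
  have hΔv_nonpos := IsLocalMax.laplacian_nonpos (Eventually.of_forall hx₀) hv
  have hΔbarrier := mul_pos hε0 (laplacian_barrier_pos hE x₀)
  linarith [hΔ x₀ hux₀]

theorem laplacian_smul_add_smul [FiniteDimensional ℝ E] {f g : E → ℝ} (hf : ContDiff ℝ 2 f)
    (hg : ContDiff ℝ 2 g) (c d : ℝ) (x : E) : Δ (c • f + d • g) x = c * Δ f x + d * Δ g x := by
  rw [(hf.const_smul c).contDiffAt.laplacian_add (f₁ := c • f) (f₂ := d • g)
    (hg.const_smul d).contDiffAt, laplacian_smul _ hf.contDiffAt, laplacian_smul _ hg.contDiffAt]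
  rfl

theorem smul_add_smul_nonpos_of_laplacian_nonneg [FiniteDimensional ℝ E] (hE : 3 ≤ finrank ℝ E)
    {f g : E → ℝ} (hf : ContDiff ℝ 2 f) (hg : ContDiff ℝ 2 g)
    (hf0 : Tendsto f (cocompact E) (𝓝 0)) (hg0 : Tendsto g (cocompact E) (𝓝 0)) (c d : ℝ)
    (hΔ : ∀ x, 0 < c * f x + d * g x → 0 ≤ c * Δ f x + d * Δ g x) (x : E) :
    c * f x + d * g x ≤ 0 := by
  refine nonpos_of_tendsto_of_laplacian_nonneg hE (u := c • f + d • g)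
    ((hf.const_smul c).add (hg.const_smul d)) le_rfl (hf0.smul_add_smul_zero hg0 c d)
    (fun y hy => ?_) x
  rw [laplacian_smul_add_smul hf hg]
  exact hΔ y hy

structure IsDecayingSolution [FiniteDimensional ℝ E] (V : E → ℝ) (a : ℝ) (u : E → ℝ) : Prop where
  contDiff : ContDiff ℝ 2 u
  laplacian_eq : ∀ x, Δ u x = a * V x * (1 + u x)
  tendsto_cocompact : Tendsto u (cocompact E) (𝓝 0)

namespace IsDecayingSolution

variable [FiniteDimensional ℝ E] {V : E → ℝ} {a b α β : ℝ} {u v w : E → ℝ}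

theorem neg_one_le (hE : 3 ≤ finrank ℝ E) (hV : ∀ x, 0 ≤ V x) (hu : IsDecayingSolution V a u)
    (ha : 0 ≤ a) (x : E) : -1 ≤ u x := by
  have hmax := nonpos_of_tendsto_of_laplacian_nonneg hE (u := (fun _ => -1) - u)
    (contDiff_const.sub hu.contDiff) (c := -1 - 0) (by norm_num)
    (tendsto_const_nhds.sub hu.tendsto_cocompact) (fun y hy => ?_) x
  · simp only [Pi.sub_apply] at hmax
    linarith
  · simp only [Pi.sub_apply] at hy
    rw [contDiffAt_const.laplacian_sub hu.contDiff.contDiffAt, laplacian_const, hu.laplacian_eq]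
    have := mul_nonneg (mul_nonneg ha (hV y)) hy.le
    simp only [Pi.zero_apply]
    linarith

theorem le_of_param_le (hE : 3 ≤ finrank ℝ E) (hV : ∀ x, 0 ≤ V x) (hu : IsDecayingSolution V a u)
    (hv : IsDecayingSolution V b v) (ha : 0 ≤ a) (hab : a ≤ b) (x : E) : v x ≤ u x := by
  have := smul_add_smul_nonpos_of_laplacian_nonneg hE hv.contDiff hu.contDiff
    hv.tendsto_cocompact hu.tendsto_cocompact 1 (-1) (fun y hy => ?_) x
  · linarith
  · rw [hu.laplacian_eq, hv.laplacian_eq]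
    have := mul_nonneg (mul_nonneg ha (hV y)) hy.le
    have := mul_nonneg (mul_nonneg (sub_nonneg.2 hab) (hV y))
      (neg_le_iff_add_nonneg'.1 (hv.neg_one_le hE hV (ha.trans hab) y))
    linarith

theorem div_le_div_of_param_le (hE : 3 ≤ finrank ℝ E) (hV : ∀ x, 0 ≤ V x)
    (hu : IsDecayingSolution V a u) (hv : IsDecayingSolution V b v) (ha : 0 < a) (hab : a ≤ b)
    (x : E) :
    u x / a ≤ v x / b := by
  have hb : 0 < b := ha.trans_le hab
  have := smul_add_smul_nonpos_of_laplacian_nonneg hE hu.contDiff hv.contDiff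
    hu.tendsto_cocompact hv.tendsto_cocompact a⁻¹ (-b⁻¹) (fun y _ => ?_) x
  · rw [div_eq_inv_mul, div_eq_inv_mul]
    linarith
  · rw [hu.laplacian_eq, hv.laplacian_eq]
    have := mul_nonneg (hV y) (sub_nonneg.2 (hu.le_of_param_le hE hV hv ha.le hab y))
    field_simp
    linarith

theorem le_convexComb (hE : 3 ≤ finrank ℝ E) (hV : ∀ x, 0 ≤ V x)
    (hu : IsDecayingSolution V a u) (hv : IsDecayingSolution V b v)
    (hw : IsDecayingSolution V (α * a + β * b) w) (ha : 0 ≤ a) (hb : 0 ≤ b) (hα : 0 ≤ α)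
    (hβ : 0 ≤ β) (hαβ : α + β = 1) (x : E) : w x ≤ α * u x + β * v x := by
  have := smul_add_smul_nonpos_of_laplacian_nonneg hE (g := α • u + β • v) hw.contDiff
    ((hu.contDiff.const_smul α).add (hv.contDiff.const_smul β)) hw.tendsto_cocompact
    (hu.tendsto_cocompact.smul_add_smul_zero hv.tendsto_cocompact α β)
    1 (-1) (fun y hy => ?_) x
  · simp only [Pi.add_apply, Pi.smul_apply, smul_eq_mul] at this
    linarith
  · simp only [Pi.add_apply, Pi.smul_apply, smul_eq_mul] at hy
    rw [laplacian_smul_add_smul (f := u) (g := v) hu.contDiff hv.contDiff, hu.laplacian_eq,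
      hv.laplacian_eq, hw.laplacian_eq]
    have hmono : 0 ≤ (b - a) * (u y - v y) := by
      rcases le_total a b with hab | hba
      · exact mul_nonneg (sub_nonneg.2 hab) (sub_nonneg.2 (hu.le_of_param_le hE hV hv ha hab y))
      · exact mul_nonneg_of_nonpos_of_nonpos (sub_nonpos.2 hba)
          (sub_nonpos.2 (hv.le_of_param_le hE hV hu hb hba y))
    -- `Δ (w - α u - β v) = (α a + β b) V (w - α u - β v) + α β V (b - a) (u - v)`
    have h1 := mul_nonneg (mul_nonneg (add_nonneg (mul_nonneg hα ha) (mul_nonneg hβ hb)) (hV y))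
      hy.le
    have h2 := mul_nonneg (mul_nonneg (mul_nonneg hα hβ) (hV y)) hmono
    obtain rfl : β = 1 - α := by linarith
    linear_combination h1 + h2

theorem convexComb_div_le (hE : 3 ≤ finrank ℝ E) (hV : ∀ x, 0 ≤ V x)
    (hu : IsDecayingSolution V a u) (hv : IsDecayingSolution V b v)
    (hw : IsDecayingSolution V (α * a + β * b) w) (ha : 0 < a) (hb : 0 < b) (hα : 0 ≤ α)
    (hβ : 0 ≤ β) (hαβ : α + β = 1) (x : E) :
    α * (u x / a) + β * (v x / b) ≤ w x / (α * a + β * b) := by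
  have hc : 0 < α * a + β * b := convex_Ioi (𝕜 := ℝ) (0 : ℝ) ha hb hα hβ hαβ
  have := smul_add_smul_nonpos_of_laplacian_nonneg hE (f := (α / a) • u + (β / b) • v)
    ((hu.contDiff.const_smul (α / a)).add (hv.contDiff.const_smul (β / b))) hw.contDiff
    (hu.tendsto_cocompact.smul_add_smul_zero hv.tendsto_cocompact _ _)
    hw.tendsto_cocompact 1 (-(α * a + β * b)⁻¹) (fun y _ => ?_) x
  · simp only [Pi.add_apply, Pi.smul_apply, smul_eq_mul] at this
    have e : α * (u x / a) + β * (v x / b) - w x / (α * a + β * b)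
        = 1 * (α / a * u x + β / b * v x) + -(α * a + β * b)⁻¹ * w x := by ring
    linarith
  · rw [laplacian_smul_add_smul (f := u) (g := v) hu.contDiff hv.contDiff, hu.laplacian_eq,
      hv.laplacian_eq, hw.laplacian_eq]
    have := mul_nonneg (hV y)
      (sub_nonneg.2 (hu.le_convexComb hE hV hv hw ha.le hb.le hα hβ hαβ y))
    field_simp
    linear_combination this - V y * hαβ

end IsDecayingSolution

section Family

variable [FiniteDimensional ℝ E] {V : E → ℝ} {w : ℝ → E → ℝ}

theorem IsDecayingSolution.antitoneOn_param (hE : 3 ≤ finrank ℝ E) (hV : ∀ x, 0 ≤ V x)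
    (hw : ∀ a, 0 < a → IsDecayingSolution V a (w a)) (x : E) :
    AntitoneOn (fun a => w a x) (Ioi 0) :=
  fun a ha b hb hab => (hw a ha).le_of_param_le hE hV (hw b hb) (le_of_lt ha) hab x

theorem IsDecayingSolution.monotoneOn_param_div (hE : 3 ≤ finrank ℝ E) (hV : ∀ x, 0 ≤ V x)
    (hw : ∀ a, 0 < a → IsDecayingSolution V a (w a)) (x : E) :
    MonotoneOn (fun a => w a x / a) (Ioi 0) :=
  fun a ha b hb hab => (hw a ha).div_le_div_of_param_le hE hV (hw b hb) ha hab x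

theorem IsDecayingSolution.convexOn_param (hE : 3 ≤ finrank ℝ E) (hV : ∀ x, 0 ≤ V x)
    (hw : ∀ a, 0 < a → IsDecayingSolution V a (w a)) (x : E) :
    ConvexOn ℝ (Ioi 0) (fun a => w a x) :=
  ⟨convex_Ioi 0, fun a ha b hb _ _ hα hβ hαβ =>
    (hw a ha).le_convexComb hE hV (hw b hb)
      (hw _ (convex_Ioi 0 ha hb hα hβ hαβ)) (le_of_lt ha) (le_of_lt hb) hα hβ hαβ x⟩

theorem IsDecayingSolution.concaveOn_param_div (hE : 3 ≤ finrank ℝ E) (hV : ∀ x, 0 ≤ V x)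
    (hw : ∀ a, 0 < a → IsDecayingSolution V a (w a)) (x : E) :
    ConcaveOn ℝ (Ioi 0) (fun a => w a x / a) :=
  ⟨convex_Ioi 0, fun a ha b hb _ _ hα hβ hαβ =>
    (hw a ha).convexComb_div_le hE hV (hw b hb)
      (hw _ (convex_Ioi 0 ha hb hα hβ hαβ)) ha hb hα hβ hαβ x⟩

end Family

theorem lap_eq_laplacian {d : ℕ} {f : EuclideanSpace ℝ (Fin d) → ℝ} (hf : ContDiff ℝ 2 f)
    (x : EuclideanSpace ℝ (Fin d)) : lap f x = Δ f x := by
  have hf' : Differentiable ℝ (fderiv ℝ f) :=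
    (hf.fderiv_right (by norm_num)).differentiable one_ne_zero
  rw [laplacian_eq_iteratedFDeriv_orthonormalBasis f (EuclideanSpace.basisFun (Fin d) ℝ), lap]
  refine Finset.sum_congr rfl fun i _ => ?_
  rw [iteratedFDeriv_two_apply, fderiv_clm_apply (hf' x) (differentiableAt_const _)]
  simp

theorem IsDecayingSolution.of_lap {d : ℕ} {V u : EuclideanSpace ℝ (Fin d) → ℝ} {a : ℝ}
    (h : ContDiff ℝ 2 u ∧ (∀ x, lap u x = a * V x * (1 + u x)) ∧
      Tendsto u (cocompact (EuclideanSpace ℝ (Fin d))) (nhds 0)) :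
    IsDecayingSolution V a u :=
  ⟨h.1, fun x => lap_eq_laplacian h.1 x ▸ h.2.1 x, h.2.2⟩

theorem stmt9_general (d : ℕ) (hd : 3 ≤ d) (V : EuclideanSpace ℝ (Fin d) → ℝ)
    (hV0 : ∀ x, 0 ≤ V x)
    (w : ℝ → EuclideanSpace ℝ (Fin d) → ℝ)
    (hw : ∀ a : ℝ, 0 < a → ContDiff ℝ 2 (w a) ∧
      (∀ x, lap (w a) x = a * V x * (1 + w a x)) ∧
      Tendsto (w a) (cocompact (EuclideanSpace ℝ (Fin d))) (nhds 0)) :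
    ∀ x : EuclideanSpace ℝ (Fin d), ∀ a : ℝ, 0 < a →
      DifferentiableAt ℝ (fun b => w b x) a ∧
      a⁻¹ * w a x ≤ deriv (fun b => w b x) a ∧
      deriv (fun b => w b x) a ≤ 0 := by
  intro x a ha
  have hE : 3 ≤ finrank ℝ (EuclideanSpace ℝ (Fin d)) := by simpa using hd
  have hsol a (ha : 0 < a) : IsDecayingSolution V a (w a) := .of_lap (hw a ha)
  have hderiv := (IsDecayingSolution.convexOn_param hE hV0 hsol x).hasDerivAt_of_concaveOn_div
    (IsDecayingSolution.concaveOn_param_div hE hV0 hsol x) ha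
  refine ⟨hderiv.differentiableAt, ?_, ?_⟩
  · have := ((IsDecayingSolution.monotoneOn_param_div hE hV0 hsol x).mono
      (Ioi_subset_Ioi ha.le)).derivWithin_nonneg (x := a)
    rw [hderiv.deriv, inv_mul_eq_div]
    exact le_add_of_nonneg_right (mul_nonneg ha.le this)
  · rw [← derivWithin_of_isOpen isOpen_Ioi ha]
    exact (IsDecayingSolution.antitoneOn_param hE hV0 hsol x).derivWithin_nonpos

theorem stmt9 (d : ℕ) (hd : 3 ≤ d) (V : EuclideanSpace ℝ (Fin d) → ℝ)
    (hV0 : ∀ x, 0 ≤ V x) (hVhold : ∃ (C r : NNReal), 0 < r ∧ HolderWith C r V)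
    (hVsupp : HasCompactSupport V) (hVint : ∫ x, V x = 1)
    (w : ℝ → EuclideanSpace ℝ (Fin d) → ℝ)
    (hw : ∀ a : ℝ, 0 < a → ContDiff ℝ 2 (w a) ∧
      (∀ x, lap (w a) x = a * V x * (1 + w a x)) ∧
      Tendsto (w a) (cocompact (EuclideanSpace ℝ (Fin d))) (nhds 0)) :
    ∀ x : EuclideanSpace ℝ (Fin d), ∀ a : ℝ, 0 < a →
      DifferentiableAt ℝ (fun b => w b x) a ∧
      a⁻¹ * w a x ≤ deriv (fun b => w b x) a ∧
      deriv (fun b => w b x) a ≤ 0 :=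
  stmt9_general d hd V hV0 w hw
end

section
/- Let d ≥ 1 be an integer, let Z > 0, and let μ be a Borel measure on ℝ^d × [0,∞) × [0,∞) such that μ(ℝ^d × [0,∞) × [t₁, t₂]) ≤ (t₂ − t₁) Z for all 0 ≤ t₁ ≤ t₂. Then there exists a family (g_t)_{t ≥ 0} of Borel measures on ℝ^d × [0,∞) such that g_t(ℝ^d × [0,∞)) ≤ Z for every t ≥ 0, the map t ↦ ∫ J dg_t is Borel measurable for every bounded continuous J : ℝ^d × [0,∞) → ℝ, and for every bounded continuous compactly supported J : ℝ^d × [0,∞) × [0,∞) → ℝ one has ∫ J dμ = ∫_0^∞ ( ∫ J(x,n,t) g_t(dx,dn) ) dt. -/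
/-!
Put time first and let `ν` be the image of `μ`. The hypotheses give the time marginal `ν.fst` mass
at most `Z (b - a)` on each `(a, b]` and none on `(-∞, 0)`, so it is dominated by `Z` times Lebesgue
measure on `[0, ∞)` (compare with the Stieltjes measure of `t ↦ Z t`). A measure whose first
marginal is dominated by `c • m` is `m ⊗ₘ η` for a kernel with `η t univ ≤ c`: disintegrate an
equivalent finite measure, fold both Radon–Nikodym densities into its conditional kernel, and
discard the null set of times where the mass exceeds `c`. Restricting `η t` to `X × [0, ∞)` also
changes it only on a null set of times, and `g t := η t` is the required family.
-/

open MeasureTheory ProbabilityTheory Set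
open scoped ENNReal NNReal

theorem StieltjesFunction.le_measure_of_forall_Ioc_le (f : StieltjesFunction ℝ) {m : Measure ℝ}
    (h : ∀ a b, a ≤ b → m (Ioc a b) ≤ ENNReal.ofReal (f b - f a)) : m ≤ f.measure := by
  have hbot : botSet (R := ℝ) = ∅ := eq_empty_of_forall_notMem fun x hx => not_isBot x hx
  -- `f.measure` is built from `OuterMeasure.ofFunction f.length`, the largest outer measure
  -- below `f.length`.
  have hle : m.toOuterMeasure ≤ f.outer := by
    refine OuterMeasure.le_ofFunction.2 fun s => ?_
    simp only [StieltjesFunction.length_eq, hbot, sdiff_empty, le_iInf_iff]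
    intro a b hs
    rcases le_or_gt a b with hab | hab
    · exact (measure_mono hs).trans (h a b hab)
    · simp [subset_empty_iff.1 (Ioc_eq_empty_of_le hab.le ▸ hs)]
  rw [Measure.le_iff', StieltjesFunction.measure]
  exact hle

namespace MeasureTheory.Measure

theorem le_smul_volume_restrict_Ici {m : Measure ℝ} {c : ℝ≥0} (h₀ : m (Iio 0) = 0)
    (h : ∀ a b, 0 ≤ a → a ≤ b → m (Icc a b) ≤ c * ENNReal.ofReal (b - a)) :
    m ≤ c • volume.restrict (Ici 0) := by
  set f : StieltjesFunction ℝ := c • StieltjesFunction.id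
  have hIoc : ∀ a b, a ≤ b → m (Ioc a b) ≤ ENNReal.ofReal (f b - f a) := by
    intro a b hab
    have hsub : Ioc a b ⊆ Iio 0 ∪ Icc (max a 0) (max b 0) := fun x hx => by
      rcases lt_or_ge x 0 with hx0 | hx0
      · exact Or.inl hx0
      · exact Or.inr ⟨max_le hx.1.le hx0, le_max_of_le_left hx.2⟩
    calc m (Ioc a b) ≤ m (Iio 0) + m (Icc (max a 0) (max b 0)) :=
          (measure_mono hsub).trans (measure_union_le _ _)
      _ ≤ c * ENNReal.ofReal (max b 0 - max a 0) := by
          rw [h₀, zero_add]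
          exact h _ _ (le_max_right _ _) (max_le_max_right 0 hab)
      _ ≤ c * ENNReal.ofReal (b - a) := by
          gcongr _ * ENNReal.ofReal ?_
          simp only [max_def]
          split_ifs <;> linarith
      _ = ENNReal.ofReal (c * b - c * a) := by
          rw [← mul_sub, ENNReal.ofReal_mul c.coe_nonneg, ENNReal.ofReal_coe_nnreal]
  calc m = m.restrict (Ici 0) := by
        refine (restrict_eq_self_of_ae_mem ?_).symm
        rwa [ae_iff, ← compl_def, compl_Ici]
    _ ≤ (c • volume).restrict (Ici 0) := by
        refine restrict_mono le_rfl ?_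
        rw [Real.volume_eq_stieltjes_id, ← StieltjesFunction.measure_smul]
        exact StieltjesFunction.le_measure_of_forall_Ioc_le _ hIoc
    _ = c • volume.restrict (Ici 0) := restrict_smul _ _ _

variable {α β : Type*} [MeasurableSpace α] [MeasurableSpace β]

theorem withDensity_toNNReal_rnDeriv_eq (μ ν : Measure α) [SigmaFinite μ]
    [μ.HaveLebesgueDecomposition ν] (h : μ ≪ ν) :
    ν.withDensity (fun x => ((μ.rnDeriv ν x).toNNReal : ℝ≥0∞)) = μ := by
  conv_rhs => rw [← withDensity_rnDeriv_eq μ ν h]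
  refine withDensity_congr_ae ?_
  filter_upwards [rnDeriv_lt_top μ ν] with x hx using ENNReal.coe_toNNReal hx.ne

theorem withDensity_compProd_withDensity {μ : Measure α} [SFinite μ] {κ : Kernel α β}
    [IsSFiniteKernel κ] {ρ : α → ℝ≥0∞} {f : α × β → ℝ≥0∞} (hρ : Measurable ρ) (hf : Measurable f)
    [IsSFiniteKernel (κ.withDensity fun a b => ρ a * f (a, b))] :
    ((μ.withDensity ρ) ⊗ₘ κ).withDensity f = μ ⊗ₘ κ.withDensity fun a b => ρ a * f (a, b) := by
  ext s hs
  rw [withDensity_apply _ hs, compProd_apply hs, ← lintegral_indicator hs,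
    lintegral_compProd (hf.indicator hs), lintegral_withDensity_eq_lintegral_mul _ hρ
      (hf.indicator hs).lintegral_kernel_prod_right']
  congr with a
  rw [Pi.mul_apply, Kernel.withDensity_apply' _ (hρ.comp measurable_fst |>.mul hf),
    lintegral_const_mul (ρ a) (f := fun b => f (a, b)) (hf.comp measurable_prodMk_left),
    ← lintegral_indicator (measurable_prodMk_left hs)]
  rfl

theorem compProd_kernel_restrict_eq {μ : Measure α} [SFinite μ] {κ : Kernel α β}
    [IsSFiniteKernel κ] {s : Set β} (hs : MeasurableSet s) (h : ∀ᵐ x ∂(μ ⊗ₘ κ), x.2 ∈ s) :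
    μ ⊗ₘ κ.restrict hs = μ ⊗ₘ κ := by
  refine compProd_congr ?_
  filter_upwards [ae_ae_of_ae_compProd h] with a ha
  rw [Kernel.restrict_apply, restrict_eq_self_of_ae_mem ha]

theorem isFiniteMeasureOnCompacts_of_fst_le [TopologicalSpace α] [TopologicalSpace β]
    {ν : Measure (α × β)} {m : Measure α} [IsFiniteMeasureOnCompacts m] (h : ν.fst ≤ m) :
    IsFiniteMeasureOnCompacts ν :=
  ⟨fun K hK => (measure_mono (subset_preimage_image Prod.fst K)).trans_lt <|
    (le_map_apply measurable_fst.aemeasurable _).trans_lt <|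
      (h _).trans_lt (hK.image continuous_fst).measure_lt_top⟩

variable {Ω : Type*} [MeasurableSpace Ω] [StandardBorelSpace Ω] [Nonempty Ω]

theorem exists_kernel_eq_compProd_of_fst_absolutelyContinuous {m : Measure α} [SigmaFinite m]
    {ν : Measure (α × Ω)} [SigmaFinite ν] (h : ν.fst ≪ m) :
    ∃ η : Kernel α Ω, IsSFiniteKernel η ∧ ν = m ⊗ₘ η := by
  set ν' := ν.toFinite
  -- The densities are a.e. finite; truncating them to `ℝ≥0` keeps the kernel below s-finite.
  set f : α × Ω → ℝ≥0 := fun x => (ν.rnDeriv ν' x).toNNReal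
  set ρ : α → ℝ≥0 := fun a => (ν'.fst.rnDeriv m a).toNNReal
  have hν' : ν'.fst ≪ m := ((toFinite_absolutelyContinuous ν).map measurable_fst).trans h
  have hη := Kernel.IsSFiniteKernel.withDensity ν'.condKernel
    (f := fun a b => (ρ a : ℝ≥0∞) * f (a, b))
    fun _ _ => ENNReal.mul_ne_top ENNReal.coe_ne_top ENNReal.coe_ne_top
  refine ⟨_, hη, ?_⟩
  calc ν = ν'.withDensity (fun x => f x) :=
        (withDensity_toNNReal_rnDeriv_eq ν ν' (absolutelyContinuous_toFinite ν)).symm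
    _ = ((m.withDensity fun a => ρ a) ⊗ₘ ν'.condKernel).withDensity (fun x => f x) := by
        rw [withDensity_toNNReal_rnDeriv_eq _ _ hν', ν'.disintegrate ν'.condKernel]
    _ = _ := withDensity_compProd_withDensity (by fun_prop) (by fun_prop)

theorem exists_kernel_eq_compProd_of_fst_le_smul {m : Measure α} [SigmaFinite m]
    {ν : Measure (α × Ω)} {c : ℝ≥0} (h : ν.fst ≤ c • m) :
    ∃ η : Kernel α Ω, IsSFiniteKernel η ∧ (∀ a, η a univ ≤ c) ∧ ν = m ⊗ₘ η := by
  have hfst : SigmaFinite ν.fst := sigmaFinite_of_le _ h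
  have : SigmaFinite ν := SigmaFinite.of_map ν measurable_fst.aemeasurable hfst
  obtain ⟨η, hη, rfl⟩ := exists_kernel_eq_compProd_of_fst_absolutelyContinuous
    ((absolutelyContinuous_of_le h).trans smul_absolutelyContinuous)
  have hmeas : MeasurableSet {a | η a univ ≤ c} :=
    measurableSet_le (Kernel.measurable_coe η .univ) measurable_const
  have hae : ∀ᵐ a ∂m, η a univ ≤ c := by
    refine ae_le_of_forall_setLIntegral_le_of_sigmaFinite (Kernel.measurable_coe η .univ)
      fun s hs _ => ?_
    calc ∫⁻ a in s, η a univ ∂m = (m ⊗ₘ η).fst s := by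
          rw [fst_apply hs, ← prod_univ, compProd_apply_prod hs .univ]
      _ ≤ (c • m) s := h s
      _ = ∫⁻ _ in s, (c : ℝ≥0∞) ∂m := by
          rw [setLIntegral_const, smul_apply, ENNReal.smul_def, smul_eq_mul, mul_comm]
  refine ⟨Kernel.piecewise hmeas η 0, inferInstance, fun a => ?_, compProd_congr ?_⟩
  · rw [Kernel.piecewise_apply]
    split_ifs with ha
    exacts [ha, by simp]
  · filter_upwards [hae] with a ha
    exact (if_pos ha).symm

end MeasureTheory.Measure

section TimeFirst

variable {X : Type*} [TopologicalSpace X]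

variable (X) in
def timeFirst : X × ℝ × ℝ ≃ₜ ℝ × X × ℝ :=
  (Homeomorph.prodAssoc X ℝ ℝ).symm.trans (Homeomorph.prodComm (X × ℝ) ℝ)

@[simp]
theorem timeFirst_apply (x : X × ℝ × ℝ) : timeFirst X x = (x.2.2, x.1, x.2.1) := rfl

variable [MeasurableSpace X] [BorelSpace X] [SecondCountableTopology X]

theorem fst_map_timeFirst_apply (μ : Measure (X × ℝ × ℝ)) {s : Set ℝ} (hs : MeasurableSet s) :
    (μ.map (timeFirst X)).fst s = μ (univ ×ˢ univ ×ˢ s) := by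
  rw [Measure.fst_apply hs, Measure.map_apply (timeFirst X).measurable (measurable_fst hs)]
  congr 1
  ext x
  simp

theorem fst_map_timeFirst_le {Z : ℝ} {μ : Measure (X × ℝ × ℝ)}
    (h₀ : μ (univ ×ˢ univ ×ˢ Iio 0) = 0)
    (hbd : ∀ t₁ t₂ : ℝ, 0 ≤ t₁ → t₁ ≤ t₂ →
      μ (univ ×ˢ ((univ : Set ℝ) ×ˢ Icc t₁ t₂)) ≤ ENNReal.ofReal ((t₂ - t₁) * Z)) :
    (μ.map (timeFirst X)).fst ≤ Z.toNNReal • volume.restrict (Ici 0) := by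
  refine Measure.le_smul_volume_restrict_Ici ?_ fun a b ha hab => ?_
  · rwa [fst_map_timeFirst_apply _ measurableSet_Iio]
  · rw [fst_map_timeFirst_apply _ measurableSet_Icc]
    refine (hbd a b ha hab).trans_eq ?_
    rw [ENNReal.ofReal_mul (sub_nonneg.2 hab), mul_comm]
    rfl

end TimeFirst

theorem stmt13_general (d : ℕ) (Z : ℝ)
    (μ : Measure (EuclideanSpace ℝ (Fin d) × ℝ × ℝ))
    (hsupp : μ ((univ ×ˢ (Ici (0 : ℝ) ×ˢ Ici (0 : ℝ)))ᶜ) = 0)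
    (hbd : ∀ t₁ t₂ : ℝ, 0 ≤ t₁ → t₁ ≤ t₂ →
      μ (univ ×ˢ ((univ : Set ℝ) ×ˢ Icc t₁ t₂)) ≤ ENNReal.ofReal ((t₂ - t₁) * Z)) :
    ∃ g : ℝ → Measure (EuclideanSpace ℝ (Fin d) × ℝ),
      (∀ t : ℝ, 0 ≤ t →
        g t univ ≤ ENNReal.ofReal Z ∧ g t ((univ ×ˢ Ici (0 : ℝ))ᶜ) = 0) ∧
      (∀ J : EuclideanSpace ℝ (Fin d) × ℝ → ℝ, Continuous J → (∃ M, ∀ p, |J p| ≤ M) →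
        Measurable fun t => ∫ p, J p ∂(g t)) ∧
      (∀ J : EuclideanSpace ℝ (Fin d) × ℝ × ℝ → ℝ,
        Continuous J → (∃ M, ∀ p, |J p| ≤ M) → HasCompactSupport J →
        (∫ p, J p ∂μ) = ∫ t in Ici (0 : ℝ), (∫ p, J (p.1, p.2, t) ∂(g t))) := by
  set φ := timeFirst (EuclideanSpace ℝ (Fin d))
  set ν := μ.map φ
  have hν : ν.fst ≤ Z.toNNReal • volume.restrict (Ici 0) := by
    refine fst_map_timeFirst_le (measure_mono_null ?_ hsupp) hbd
    exact fun x hx h => not_le.2 (mem_Iio.1 hx.2.2) (mem_Ici.1 h.2.2)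
  obtain ⟨η, hη, hηZ, hνη⟩ := Measure.exists_kernel_eq_compProd_of_fst_le_smul hν
  set S : Set (EuclideanSpace ℝ (Fin d) × ℝ) := univ ×ˢ Ici 0
  have hS : MeasurableSet S := MeasurableSet.univ.prod measurableSet_Ici
  have hνS : ∀ᵐ q ∂ν, q.2 ∈ S := by
    rw [ae_map_iff φ.measurable.aemeasurable (measurable_snd hS)]
    filter_upwards [mem_ae_iff.2 hsupp] with x hx using ⟨trivial, hx.2.1⟩
  rw [← Measure.compProd_kernel_restrict_eq hS (hνη ▸ hνS)] at hνη
  refine ⟨η.restrict hS, fun t _ => ⟨?_, ?_⟩, fun J hJ _ => ?_, fun J hJ _ hJs => ?_⟩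
  · rw [Kernel.restrict_apply]
    exact (Measure.restrict_le_self univ).trans (hηZ t)
  · rw [Kernel.restrict_apply, Measure.restrict_apply hS.compl, compl_inter_self, measure_empty]
  · exact (hJ.stronglyMeasurable.comp_measurable measurable_snd).integral_kernel_prod_right'
      |>.measurable
  · have := Measure.isFiniteMeasureOnCompacts_of_fst_le hν
    have hint : Integrable (J ∘ φ.symm) ν :=
      (hJ.comp φ.symm.continuous).integrable_of_hasCompactSupport (hJs.comp_homeomorph φ.symm)
    calc ∫ p, J p ∂μ = ∫ q, (J ∘ φ.symm) q ∂ν := by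
          rw [integral_map φ.measurable.aemeasurable hint.aestronglyMeasurable]
          simp
      _ = _ := by
          rw [hνη] at hint ⊢
          exact Measure.integral_compProd hint

theorem stmt13 (d : ℕ) (hd : 1 ≤ d) (Z : ℝ) (hZ : 0 < Z)
    (μ : Measure (EuclideanSpace ℝ (Fin d) × ℝ × ℝ))
    (hsupp : μ ((univ ×ˢ (Ici (0 : ℝ) ×ˢ Ici (0 : ℝ)))ᶜ) = 0)
    (hbd : ∀ t₁ t₂ : ℝ, 0 ≤ t₁ → t₁ ≤ t₂ →
      μ (univ ×ˢ ((univ : Set ℝ) ×ˢ Icc t₁ t₂)) ≤ ENNReal.ofReal ((t₂ - t₁) * Z)) :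
    ∃ g : ℝ → Measure (EuclideanSpace ℝ (Fin d) × ℝ),
      (∀ t : ℝ, 0 ≤ t →
        g t univ ≤ ENNReal.ofReal Z ∧ g t ((univ ×ˢ Ici (0 : ℝ))ᶜ) = 0) ∧
      (∀ J : EuclideanSpace ℝ (Fin d) × ℝ → ℝ, Continuous J → (∃ M, ∀ p, |J p| ≤ M) →
        Measurable fun t => ∫ p, J p ∂(g t)) ∧
      (∀ J : EuclideanSpace ℝ (Fin d) × ℝ × ℝ → ℝ,
        Continuous J → (∃ M, ∀ p, |J p| ≤ M) → HasCompactSupport J →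
        (∫ p, J p ∂μ) = ∫ t in Ici (0 : ℝ), (∫ p, J (p.1, p.2, t) ∂(g t))) :=
  stmt13_general d Z μ hsupp hbd
end
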